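/- arXiv:2502.18396 — 5 statements merged into one kernel-verified Lean document; each statement's English description precedes it below -/
import Mathlib

section
/- Let Δ be a simplicial complex and let F be a leaf of Δ with N_Δ(F) = {F_1, …, F_m}. Then F is a good leaf of Δ if and only if there is a permutation (j_1, …, j_m) of (1, …, m) such that F ∩ F_{j_1} ⊇ F ∩ F_{j_2} ⊇ ⋯ ⊇ F ∩ F_{j_m}. -/
open MvPolynomial

/-- A simplicial complex on the vertex set `V`, presented by its set of facets
(the maximal faces).  Every facet is nonempty and no facet contains another. -/
structure SimplicialComplexOn (V : Type) [Fintype V] [DecidableEq V] : Type where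
  facets : Finset (Finset V)
  nonempty_facet : ∀ F ∈ facets, F.Nonempty
  antichain : ∀ F ∈ facets, ∀ G ∈ facets, F ⊆ G → F = G

variable {V : Type} [Fintype V] [DecidableEq V]

/-- `F` is a leaf of the collection of facets `S`: either `F` is the only facet, or
there is a facet `G ≠ F` (a joint) with `F ∩ H ⊆ F ∩ G` for every facet `H ≠ F`. -/
def IsLeafOf (S : Finset (Finset V)) (F : Finset V) : Prop :=
  F ∈ S ∧ ((∀ H ∈ S, H = F) ∨
    ∃ G ∈ S, G ≠ F ∧ ∀ H ∈ S, H ≠ F → F ∩ H ⊆ F ∩ G)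

/-- The forest property for a facet collection: every nonempty subcollection
(i.e. every nonempty subcomplex) has a leaf. -/
def HasLeafProp (S : Finset (Finset V)) : Prop :=
  ∀ T ⊆ S, T.Nonempty → ∃ F, IsLeafOf T F

/-- A good leaf: a facet which is a leaf of every subcomplex containing it. -/
def IsGoodLeafOf (S : Finset (Finset V)) (F : Finset V) : Prop :=
  F ∈ S ∧ ∀ T ⊆ S, F ∈ T → IsLeafOf T F

/-- A special leaf: a leaf `F` such that for all facets `H, H' ≠ F`,
`H ∩ H' ≠ ∅` iff `(H ∩ H') \ F ≠ ∅`. -/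
def IsSpecialLeafOf (S : Finset (Finset V)) (F : Finset V) : Prop :=
  IsLeafOf S F ∧ ∀ H ∈ S, ∀ H' ∈ S, H ≠ F → H' ≠ F →
    ((H ∩ H').Nonempty ↔ ((H ∩ H') \ F).Nonempty)

/-- A matching: a subcollection of the facets that is pairwise disjoint. -/
def IsMatchingOf (S : Finset (Finset V)) (M : Finset (Finset V)) : Prop :=
  M ⊆ S ∧ ∀ F ∈ M, ∀ G ∈ M, F ≠ G → F ∩ G = ∅

/-- The matching number: maximum size of a matching. -/
noncomputable def matchingNumberOf (S : Finset (Finset V)) : ℕ :=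
  sSup {n | ∃ M : Finset (Finset V), IsMatchingOf S M ∧ M.card = n}

/-- The facet collection `S` is grafted: it decomposes as `Fs ∪ Gs` where
(1) every vertex of a `G ∈ Gs` lies in some `F ∈ Fs`, (2) `Fs` is exactly the set
of leaves of `S`, (3) `Fs` and `Gs` are disjoint, (4) the members of `Fs` are
pairwise disjoint, and (5) for each `G ∈ Gs`, deleting the facet `G` leaves a
grafted collection. -/
inductive IsGrafted : Finset (Finset V) → Prop where
  | intro (S Fs Gs : Finset (Finset V))
      (hunion : S = Fs ∪ Gs)
      (hdisj : Disjoint Fs Gs)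
      (hcover : ∀ G ∈ Gs, ∀ v ∈ G, ∃ F ∈ Fs, v ∈ F)
      (hleaves : ∀ F, IsLeafOf S F ↔ F ∈ Fs)
      (hFdisj : ∀ F ∈ Fs, ∀ F' ∈ Fs, F ≠ F' → F ∩ F' = ∅)
      (hrec : ∀ G ∈ Gs, IsGrafted (S.erase G)) :
      IsGrafted S

/-- `S` is the (minimal presentation of the) grafting of the collection `Gs`
with the simplices `Fs`. -/
def IsGraftingDecomp (S Fs Gs : Finset (Finset V)) : Prop :=
  S = Fs ∪ Gs ∧ Disjoint Fs Gs ∧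
  (∀ G ∈ Gs, ∀ v ∈ G, ∃ F ∈ Fs, v ∈ F) ∧
  (∀ F, IsLeafOf S F ↔ F ∈ Fs) ∧
  (∀ F ∈ Fs, ∀ F' ∈ Fs, F ≠ F' → F ∩ F' = ∅) ∧
  (∀ G ∈ Gs, IsGrafted (S.erase G))

/-- A Cohen-Macaulay simplicial forest, combinatorially: a grafted simplicial forest. -/
def IsCMForestFacets (S : Finset (Finset V)) : Prop :=
  HasLeafProp S ∧ IsGrafted S

/-- The closed neighborhood `N[F] = {F} ∪ {G ∈ S : G ≠ F, G ∩ F ≠ ∅}`. -/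
def closedNbhd (S : Finset (Finset V)) (F : Finset V) : Finset (Finset V) :=
  insert F (S.filter fun G => G ≠ F ∧ (G ∩ F).Nonempty)

/-- The contraction of the facet collection `S` on `A`: the minimal members of
`{F \ A : F ∈ S}`. -/
def contraction (S : Finset (Finset V)) (A : Finset V) : Finset (Finset V) :=
  (S.image fun F => F \ A).filter fun F' => ∀ G ∈ S, G \ A ⊆ F' → G \ A = F'

variable (K : Type) [Field K]

/-- The square-free monomial `x_S = ∏_{v ∈ S} x_v`. -/
noncomputable def xMon (S : Finset V) : MvPolynomial V K := ∏ v ∈ S, X v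

/-- The facet ideal `I(Δ) = ⟨x_F : F a facet⟩`. -/
noncomputable def facetIdealOf (S : Finset (Finset V)) : Ideal (MvPolynomial V K) :=
  Ideal.span { p | ∃ F ∈ S, p = xMon K F }

/-- The `k`-th square-free power of an ideal: the ideal generated by all
square-free monomials lying in `I ^ k`. -/
noncomputable def sqfreePow (I : Ideal (MvPolynomial V K)) (k : ℕ) :
    Ideal (MvPolynomial V K) :=
  Ideal.span { p | (∃ S : Finset V, p = xMon K S) ∧ p ∈ I ^ k }

/-- The depth of `R/I` with respect to the homogeneous maximal ideal
`m = ⟨x_v : v ∈ V⟩`: the largest length of an `R/I`-regular sequence of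
elements of `m`. -/
noncomputable def gradedDepth (I : Ideal (MvPolynomial V K)) : ℕ :=
  sSup {n | ∃ rs : List (MvPolynomial V K), rs.length = n ∧
    (∀ r ∈ rs, r ∈ Ideal.span (Set.range (X : V → MvPolynomial V K))) ∧
    RingTheory.Sequence.IsRegular (MvPolynomial V K ⧸ I) rs}

/-- `R/I` is Cohen-Macaulay: its depth equals its Krull dimension. -/
def IsCMQuot (I : Ideal (MvPolynomial V K)) : Prop :=
  ((gradedDepth K I : ℕ∞) : WithBot ℕ∞) = ringKrullDim (MvPolynomial V K ⧸ I)

section Statements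

variable {V : Type} [Fintype V] [DecidableEq V] (K : Type) [Field K]

theorem stmt7 (Δ : SimplicialComplexOn V) (F : Finset V)
    (hF : IsLeafOf Δ.facets F)
    (m : ℕ) (Fn : Fin m → Finset V) (hinj : Function.Injective Fn)
    (hrange : ∀ G : Finset V,
      (∃ i, Fn i = G) ↔ G ∈ Δ.facets ∧ G ≠ F ∧ (G ∩ F).Nonempty) :
    IsGoodLeafOf Δ.facets F ↔
      ∃ σ : Equiv.Perm (Fin m), ∀ i j : Fin m, i ≤ j →
        F ∩ Fn (σ j) ⊆ F ∩ Fn (σ i) := by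
  constructor
  · intro hgood
    have chain : ∀ i j : Fin m, F ∩ Fn i ⊆ F ∩ Fn j ∨ F ∩ Fn j ⊆ F ∩ Fn i := by
      intro i j
      have hi := (hrange (Fn i)).mp ⟨i, rfl⟩
      have hj := (hrange (Fn j)).mp ⟨j, rfl⟩
      have hT : ({F, Fn i, Fn j} : Finset (Finset V)) ⊆ Δ.facets := by
        intro H hH
        simp only [Finset.mem_insert, Finset.mem_singleton] at hH
        rcases hH with rfl | rfl | rfl
        · exact hgood.1
        · exact hi.1
        · exact hj.1
      have hleaf := hgood.2 _ hT (by simp)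
      rcases hleaf.2 with h | ⟨G, hG, hGne, hjoint⟩
      · exact absurd (h (Fn i) (by simp)) hi.2.1
      · simp only [Finset.mem_insert, Finset.mem_singleton] at hG
        rcases hG with rfl | rfl | rfl
        · exact absurd rfl hGne
        · right; exact hjoint (Fn j) (by simp) hj.2.1
        · left; exact hjoint (Fn i) (by simp) hi.2.1
    set σ := Tuple.sort (fun i => OrderDual.toDual (F ∩ Fn i).card) with hσdef
    refine ⟨σ, fun i j hij => ?_⟩
    have hmono := Tuple.monotone_sort (fun i => OrderDual.toDual (F ∩ Fn i).card)
    have hcard : (F ∩ Fn (σ j)).card ≤ (F ∩ Fn (σ i)).card := hmono hij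
    rcases chain (σ j) (σ i) with h | h
    · exact h
    · exact le_of_eq (Finset.eq_of_subset_of_card_le h hcard).symm
  · rintro ⟨σ, hσ⟩
    refine ⟨hF.1, fun T hTS hFT => ⟨hFT, ?_⟩⟩
    by_cases hall : ∀ H ∈ T, H = F
    · exact Or.inl hall
    push_neg at hall
    obtain ⟨H0, hH0T, hH0ne⟩ := hall
    by_cases hI : ∃ k : Fin m, Fn (σ k) ∈ T
    · obtain ⟨k, hk, hkmin⟩ := Finset.exists_min_image
        (Finset.univ.filter fun k => Fn (σ k) ∈ T) id
        (by obtain ⟨k, hk⟩ := hI; exact ⟨k, by simp [hk]⟩)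
      have hGT : Fn (σ k) ∈ T := by simpa using hk
      have hGne : Fn (σ k) ≠ F := ((hrange _).mp ⟨σ k, rfl⟩).2.1
      refine Or.inr ⟨Fn (σ k), hGT, hGne, fun H hHT hHne => ?_⟩
      by_cases hint : (H ∩ F).Nonempty
      · obtain ⟨i, hi⟩ := (hrange H).mpr ⟨hTS hHT, hHne, hint⟩
        have happly : σ (σ.symm i) = i := σ.apply_symm_apply i
        have hmem : σ.symm i ∈ Finset.univ.filter fun k => Fn (σ k) ∈ T := by
          rw [Finset.mem_filter, happly, hi]
          exact ⟨Finset.mem_univ _, hHT⟩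
        have hle : k ≤ σ.symm i := hkmin _ hmem
        have hsub := hσ k (σ.symm i) hle
        rw [happly, hi] at hsub
        exact hsub
      · rw [Finset.not_nonempty_iff_eq_empty] at hint
        intro x hx
        rcases Finset.mem_inter.mp hx with ⟨hxF, hxH⟩
        exact absurd (Finset.mem_inter.mpr ⟨hxH, hxF⟩) (by simp [hint])
    · push_neg at hI
      refine Or.inr ⟨H0, hH0T, hH0ne, fun H hHT hHne => ?_⟩
      by_cases hint : (H ∩ F).Nonempty
      · obtain ⟨i, hi⟩ := (hrange H).mpr ⟨hTS hHT, hHne, hint⟩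
        exact absurd (by rw [σ.apply_symm_apply, hi]; exact hHT) (hI (σ.symm i))
      · rw [Finset.not_nonempty_iff_eq_empty] at hint
        intro x hx
        rcases Finset.mem_inter.mp hx with ⟨hxF, hxH⟩
        exact absurd (Finset.mem_inter.mpr ⟨hxH, hxF⟩) (by simp [hint])

end Statements
end

section
/- Let Δ = ⟨F_1,…,F_r⟩ ∪ ⟨G_1,…,G_s⟩ be a Cohen-Macaulay simplicial forest (with minimal presentation, grafted by the simplices F_1,…,F_r). Then the matching number of Δ equals the number of grafting simplices: ν(Δ) = r. -/
open MvPolynomial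

variable {V : Type} [Fintype V] [DecidableEq V]

variable (K : Type) [Field K]

/-!
The grafting simplices `Fs` are pairwise disjoint, so they form a matching; it remains to show
that no matching `M` is larger. A facet `G ∈ M` outside `Fs` lies in `Gs`, so it is covered by
`Fs` without lying inside a single member of it, and therefore meets two distinct members of
`Fs`, neither of which is in `M`. We show that `|M \ Fs| ≤ |Fs \ M|` holds whenever every member
of one matching meets two members of another. To see this, take a leaf `L` of the subcomplex
formed by `M \ Fs` and the members of `Fs \ M` it meets. A leaf meets the other facets only
inside its joint. So `L` cannot be in `M`, since it would meet two members of `Fs` inside one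
facet. Hence `L ∈ Fs` meets exactly one `G ∈ M`. Deleting `L` and `G` and inducting gives the
bound.
-/

section Matchings

omit [Fintype V]

theorem isMatchingOf_iff {S M : Finset (Finset V)} :
    IsMatchingOf S M ↔ M ⊆ S ∧ (M : Set (Finset V)).PairwiseDisjoint id := by
  simp only [IsMatchingOf, Set.PairwiseDisjoint, Set.Pairwise, Finset.mem_coe, Function.onFun,
    id, Finset.disjoint_iff_inter_eq_empty]

theorem matchingNumberOf_eq_card {S M : Finset (Finset V)} (hM : IsMatchingOf S M)
    (hmax : ∀ M', IsMatchingOf S M' → M'.card ≤ M.card) :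
    matchingNumberOf S = M.card :=
  IsGreatest.csSup_eq ⟨⟨M, hM, rfl⟩, by rintro _ ⟨M', hM', rfl⟩; exact hmax M' hM'⟩

theorem Finset.exists_ne_inter_nonempty_of_not_subset {α : Type*} [DecidableEq α]
    {G : Finset α} {C : Finset (Finset α)} (hG : G.Nonempty) (hcover : ∀ v ∈ G, ∃ F ∈ C, v ∈ F)
    (hnsub : ∀ F ∈ C, ¬G ⊆ F) :
    ∃ F₁ ∈ C, ∃ F₂ ∈ C, F₁ ≠ F₂ ∧ (G ∩ F₁).Nonempty ∧ (G ∩ F₂).Nonempty := by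
  obtain ⟨v, hv⟩ := hG
  obtain ⟨F₁, hF₁, hvF₁⟩ := hcover v hv
  obtain ⟨w, hw, hwF₁⟩ := Finset.not_subset.1 (hnsub F₁ hF₁)
  obtain ⟨F₂, hF₂, hwF₂⟩ := hcover w hw
  exact ⟨F₁, hF₁, F₂, hF₂, by rintro rfl; exact hwF₁ hwF₂,
    ⟨v, Finset.mem_inter.2 ⟨hv, hvF₁⟩⟩, ⟨w, Finset.mem_inter.2 ⟨hw, hwF₂⟩⟩⟩

theorem IsLeafOf.eq_of_inter_nonempty {T M N : Finset (Finset V)} {L F₁ F₂ : Finset V}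
    (hM : (M : Set (Finset V)).PairwiseDisjoint id)
    (hN : (N : Set (Finset V)).PairwiseDisjoint id) (hMN : Disjoint M N) (hT : T ⊆ M ∪ N)
    (hL : IsLeafOf T L) (hLM : L ∈ M) (hF₁T : F₁ ∈ T) (hF₁N : F₁ ∈ N) (hF₂T : F₂ ∈ T)
    (hF₂N : F₂ ∈ N) (h₁ : (L ∩ F₁).Nonempty) (h₂ : (L ∩ F₂).Nonempty) :
    F₁ = F₂ := by
  obtain ⟨-, honly | ⟨J, hJT, hJL, hjoint⟩⟩ := hL
  · exact (honly F₁ hF₁T).trans (honly F₂ hF₂T).symm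
  have eq_joint : ∀ {F}, F ∈ T → F ∈ N → (L ∩ F).Nonempty → F = J := by
    rintro F hFT hFN ⟨v, hv⟩
    have hFL : F ≠ L := by rintro rfl; exact Finset.disjoint_left.1 hMN hLM hFN
    have hvJ := Finset.mem_inter.1 (hjoint F hFT hFL hv)
    rcases Finset.mem_union.1 (hT hJT) with hJM | hJN
    · exact absurd (hM.elim_finset hLM hJM v hvJ.1 hvJ.2) hJL.symm
    · exact hN.elim_finset hFN hJN v (Finset.mem_inter.1 hv).2 hvJ.2
  exact (eq_joint hF₁T hF₁N h₁).trans (eq_joint hF₂T hF₂N h₂).symm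

theorem card_le_card_of_forall_exists_ne_inter_nonempty {S M N : Finset (Finset V)}
    (hS : HasLeafProp S) (hMS : M ⊆ S) (hNS : N ⊆ S)
    (hM : (M : Set (Finset V)).PairwiseDisjoint id)
    (hN : (N : Set (Finset V)).PairwiseDisjoint id)
    (hmeet : ∀ G ∈ M, ∃ F₁ ∈ N, ∃ F₂ ∈ N, F₁ ≠ F₂ ∧ (G ∩ F₁).Nonempty ∧ (G ∩ F₂).Nonempty) :
    M.card ≤ N.card := by
  induction M using Finset.strongInduction generalizing N with
  | H M ih =>
  rcases M.eq_empty_or_nonempty with rfl | ⟨G₀, hG₀⟩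
  · simp
  have hMN : Disjoint M N := Finset.disjoint_left.2 fun G hGM hGN => by
    obtain ⟨F₁, hF₁, F₂, hF₂, hne, ⟨v, hv⟩, ⟨w, hw⟩⟩ := hmeet G hGM
    simp only [Finset.mem_inter] at hv hw
    exact hne ((hN.elim_finset hF₁ hGN v hv.2 hv.1).trans
      (hN.elim_finset hGN hF₂ w hw.1 hw.2))
  -- keeping only the members of `N` that meet `M` makes a leaf taken from `N` meet some `G ∈ M`
  set T := M ∪ N.filter fun F => ∃ G ∈ M, (G ∩ F).Nonempty
  have hTMN : T ⊆ M ∪ N := Finset.union_subset_union_right (Finset.filter_subset _ _)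
  have hmemT : ∀ F ∈ N, ∀ G ∈ M, (G ∩ F).Nonempty → F ∈ T := fun F hF G hG h =>
    Finset.mem_union_right _ (Finset.mem_filter.2 ⟨hF, G, hG, h⟩)
  obtain ⟨L, hL⟩ := hS T (hTMN.trans (Finset.union_subset hMS hNS))
    ⟨G₀, Finset.mem_union_left _ hG₀⟩
  have hLM : L ∉ M := fun hLM => by
    obtain ⟨F₁, hF₁, F₂, hF₂, hne, h₁, h₂⟩ := hmeet L hLM
    exact hne (hL.eq_of_inter_nonempty hM hN hMN hTMN hLM (hmemT F₁ hF₁ L hLM h₁) hF₁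
      (hmemT F₂ hF₂ L hLM h₂) hF₂ h₁ h₂)
  obtain ⟨hLN, G, hGM, hGL⟩ : L ∈ N ∧ ∃ G ∈ M, (G ∩ L).Nonempty := by
    simpa [T, hLM] using hL.1
  have huniq : ∀ G' ∈ M, (G' ∩ L).Nonempty → G' = G := fun G' hG'M hG'L =>
    hL.eq_of_inter_nonempty hN hM hMN.symm (Finset.union_comm M N ▸ hTMN) hLN
      (Finset.mem_union_left _ hG'M) hG'M (Finset.mem_union_left _ hGM) hGM
      (Finset.inter_comm G' L ▸ hG'L) (Finset.inter_comm G L ▸ hGL)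
  have hcard := ih (M.erase G) (Finset.erase_ssubset hGM) (N := N.erase L)
    ((Finset.erase_subset _ _).trans hMS) ((Finset.erase_subset _ _).trans hNS)
    (hM.subset (Finset.coe_subset.2 (Finset.erase_subset _ _)))
    (hN.subset (Finset.coe_subset.2 (Finset.erase_subset _ _))) fun G' hG' => by
      obtain ⟨hG'G, hG'M⟩ := Finset.mem_erase.1 hG'
      obtain ⟨F₁, hF₁, F₂, hF₂, hne, h₁, h₂⟩ := hmeet G' hG'M
      have hne_L : ∀ {F}, (G' ∩ F).Nonempty → F ≠ L := by
        rintro F h rfl; exact hG'G (huniq G' hG'M h)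
      exact ⟨F₁, Finset.mem_erase.2 ⟨hne_L h₁, hF₁⟩, F₂, Finset.mem_erase.2 ⟨hne_L h₂, hF₂⟩,
        hne, h₁, h₂⟩
  rw [Finset.card_erase_of_mem hGM, Finset.card_erase_of_mem hLN] at hcard
  have := Finset.card_pos.2 ⟨L, hLN⟩
  omega

theorem card_le_card_of_isMatchingOf {S Fs M : Finset (Finset V)} (hS : HasLeafProp S)
    (hFs : IsMatchingOf S Fs)
    (hmeet : ∀ G ∈ S \ Fs, ∃ F₁ ∈ Fs, ∃ F₂ ∈ Fs, F₁ ≠ F₂ ∧ (G ∩ F₁).Nonempty ∧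
      (G ∩ F₂).Nonempty)
    (hM : IsMatchingOf S M) :
    M.card ≤ Fs.card := by
  rw [isMatchingOf_iff] at hFs hM
  rw [← Finset.card_sdiff_le_card_sdiff_iff]
  refine card_le_card_of_forall_exists_ne_inter_nonempty hS
    ((Finset.sdiff_subset).trans hM.1) ((Finset.sdiff_subset).trans hFs.1)
    (hM.2.subset (Finset.coe_subset.2 Finset.sdiff_subset))
    (hFs.2.subset (Finset.coe_subset.2 Finset.sdiff_subset)) fun G hG => ?_
  obtain ⟨hGM, hGFs⟩ := Finset.mem_sdiff.1 hG
  have hnotM : ∀ {F}, F ∈ Fs → (G ∩ F).Nonempty → F ∈ Fs \ M := fun hF ⟨v, hv⟩ =>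
    Finset.mem_sdiff.2 ⟨hF, fun hFM => by
      rw [Finset.mem_inter] at hv
      exact hGFs (hM.2.elim_finset hGM hFM v hv.1 hv.2 ▸ hF)⟩
  obtain ⟨F₁, hF₁, F₂, hF₂, hne, h₁, h₂⟩ := hmeet G (Finset.sdiff_subset_sdiff hM.1 le_rfl hG)
  exact ⟨F₁, hnotM hF₁ h₁, F₂, hnotM hF₂ h₂, hne, h₁, h₂⟩

end Matchings

section Statements

variable {V : Type} [Fintype V] [DecidableEq V] (K : Type) [Field K]

theorem stmt8 (Δ : SimplicialComplexOn V) (Fs Gs : Finset (Finset V))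
    (hforest : HasLeafProp Δ.facets)
    (hdecomp : IsGraftingDecomp Δ.facets Fs Gs) :
    matchingNumberOf Δ.facets = Fs.card := by
  obtain ⟨hunion, -, hcover, -, hFdisj, -⟩ := hdecomp
  have hFs : IsMatchingOf Δ.facets Fs := ⟨hunion ▸ Finset.subset_union_left, hFdisj⟩
  refine matchingNumberOf_eq_card hFs fun M hM => card_le_card_of_isMatchingOf hforest hFs ?_ hM
  intro G hG
  obtain ⟨hGS, hGFs⟩ := Finset.mem_sdiff.1 hG
  have hGGs : G ∈ Gs := by
    rw [hunion, Finset.mem_union] at hGS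
    exact hGS.resolve_left hGFs
  refine Finset.exists_ne_inter_nonempty_of_not_subset (Δ.nonempty_facet G hGS)
    (hcover G hGGs) fun F hF hGF => hGFs ?_
  rwa [Δ.antichain G hGS F (hFs.1 hF) hGF]

end Statements
end

section
/- Let Δ be a Cohen-Macaulay simplicial forest on vertex set V(Δ), let R = K[x_v : v ∈ V(Δ)], and let F be a leaf of Δ. Let Δ₁ be the subcomplex with F(Δ₁) = F(Δ) ∖ N_Δ[F]. Then for all 1 ≤ k ≤ ν(Δ), the ideal quotient satisfies (I(Δ)^{[k]} : x_F) = I(Δ₁)^{[k−1]}, where by convention I(Δ₁)^{[0]} = R. -/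
open MvPolynomial

variable {V : Type} [Fintype V] [DecidableEq V]

variable (K : Type) [Field K]

/-! Square-free powers of a facet ideal are monomial ideals, and a square-free monomial `x_T`
lies in `I(Δ)^[k]` exactly when `T` contains `k` pairwise disjoint facets. Since
`p * x_F` has support `{a + 1_F : a ∈ supp p}`, membership of `p` in the colon ideal becomes,
for each `a ∈ supp p` and `T = supp a`, a statement about matchings inside `T ∪ F`.

The combinatorial input is that in a grafted complex any two facets meeting a leaf `F` meet
each other. By induction on the number of facets: the joint `J` of `F` meets `F`, so it is not a
leaf, and deleting it leaves a grafted complex in which `F` is still a leaf, because a vertex of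
`F` outside `J` lies in no other facet. Consequently a `(k+1)`-matching inside `T ∪ F` has at
most one member meeting `F`; dropping it (or any member) leaves a `k`-matching of `Δ₁` inside
`T`, and conversely `F` extends any `k`-matching of `Δ₁` inside `T`. -/

section

variable {σ R : Type*} [CommSemiring R]

theorem support_mul_monomial_one (p : MvPolynomial σ R) (e : σ →₀ ℕ) :
    (p * monomial e 1).support = p.support.map (addRightEmbedding e) :=
  AddMonoidAlgebra.support_coeff_mul_single p _ (by simp) _

end

section

variable {V : Type}

theorem xMon_dvd_xMon {T T' : Finset V} (h : T ⊆ T') : xMon K T ∣ xMon K T' :=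
  Finset.prod_dvd_prod_of_subset _ _ _ h

end

section

variable {V : Type} [DecidableEq V]

namespace IsGrafted

variable {S : Finset (Finset V)}

theorem isLeafOf_of_free_vertex (hS : IsGrafted S) {F : Finset V} (hF : F ∈ S) {v : V}
    (hvF : v ∈ F) (hv : ∀ H ∈ S, v ∈ H → H = F) : IsLeafOf S F := by
  obtain ⟨S, Fs, Gs, rfl, hdisj, hcover, hleaves, -, -⟩ := hS
  refine (hleaves F).2 ((Finset.mem_union.1 hF).resolve_right fun hFG => ?_)
  obtain ⟨L, hL, hvL⟩ := hcover F hFG v hvF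
  obtain rfl : L = F := hv L (Finset.mem_union_left _ hL) hvL
  exact Finset.disjoint_left.1 hdisj hL hFG

theorem inter_nonempty_of_inter_leaf_nonempty (hS : IsGrafted S)
    (hanti : ∀ A ∈ S, ∀ B ∈ S, A ⊆ B → A = B) {F : Finset V} (hF : IsLeafOf S F)
    {H₁ H₂ : Finset V} (h₁ : H₁ ∈ S) (h₂ : H₂ ∈ S)
    (h₁F : (H₁ ∩ F).Nonempty) (h₂F : (H₂ ∩ F).Nonempty) : (H₁ ∩ H₂).Nonempty := by
  induction S using Finset.strongInduction generalizing H₁ H₂ with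
  | H S ih =>
  obtain ⟨hFS, hsingle | ⟨J, hJ, hJF, hjoint⟩⟩ := hF
  · rwa [hsingle H₂ h₂]
  by_cases hH₂F : H₂ = F
  · rwa [hH₂F]
  by_cases hH₁F : H₁ = F
  · rwa [hH₁F, Finset.inter_comm]
  have meets_joint : ∀ H ∈ S, H ≠ F → (H ∩ F).Nonempty → (F ∩ J).Nonempty ∧ (H ∩ J).Nonempty := by
    rintro H hH hHF ⟨v, hv⟩
    rw [Finset.mem_inter] at hv
    have hvJ := Finset.mem_inter.1 (hjoint H hH hHF (Finset.mem_inter.2 ⟨hv.2, hv.1⟩))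
    exact ⟨⟨v, Finset.mem_inter.2 hvJ⟩, ⟨v, Finset.mem_inter.2 ⟨hv.1, hvJ.2⟩⟩⟩
  rcases eq_or_ne H₁ J with rfl | hH₁J
  · rw [Finset.inter_comm]
    exact (meets_joint H₂ h₂ hH₂F h₂F).2
  rcases eq_or_ne H₂ J with rfl | hH₂J
  · exact (meets_joint H₁ h₁ hH₁F h₁F).2
  obtain ⟨S, Fs, Gs, rfl, hdisj, -, hleaves, hFdisj, hrec⟩ := hS
  have hJG : J ∈ Gs := by
    refine (Finset.mem_union.1 hJ).resolve_left fun hJFs => ?_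
    have hFJ := hFdisj F ((hleaves F).1 ⟨hFS, .inr ⟨J, hJ, hJF, hjoint⟩⟩) J hJFs hJF.symm
    exact (meets_joint H₁ h₁ hH₁F h₁F).1.ne_empty hFJ
  obtain ⟨v, hvF, hvJ⟩ := Finset.not_subset.1 fun hFJ => hJF (hanti F hFS J hJ hFJ).symm
  have hF' : IsLeafOf ((Fs ∪ Gs).erase J) F := by
    refine (hrec J hJG).isLeafOf_of_free_vertex (Finset.mem_erase.2 ⟨hJF.symm, hFS⟩) hvF ?_
    intro H hH hvH
    by_contra hHF
    exact hvJ (Finset.mem_inter.1 (hjoint H (Finset.mem_of_mem_erase hH) hHF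
      (Finset.mem_inter.2 ⟨hvF, hvH⟩))).2
  exact ih _ (Finset.erase_ssubset hJ) (hrec J hJG)
    (fun A hA B hB => hanti A (Finset.mem_of_mem_erase hA) B (Finset.mem_of_mem_erase hB)) hF'
    (Finset.mem_erase.2 ⟨hH₁J, h₁⟩) (Finset.mem_erase.2 ⟨hH₂J, h₂⟩) h₁F h₂F

end IsGrafted

theorem mem_sdiff_closedNbhd {S : Finset (Finset V)} {F G : Finset V} (hF : F.Nonempty) :
    G ∈ S \ closedNbhd S F ↔ G ∈ S ∧ Disjoint G F := by
  simp only [closedNbhd, Finset.mem_sdiff, Finset.mem_insert, Finset.mem_filter,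
    Finset.disjoint_iff_inter_eq_empty, ← Finset.not_nonempty_iff_eq_empty, not_or]
  constructor
  · rintro ⟨hG, hGF, hmeet⟩
    exact ⟨hG, fun h => hmeet ⟨hG, hGF, h⟩⟩
  · rintro ⟨hG, hGF⟩
    refine ⟨hG, ?_, fun h => hGF h.2.2⟩
    rintro rfl
    exact hGF (by rwa [Finset.inter_self])

def HasMatchingIn (S : Finset (Finset V)) (k : ℕ) (T : Finset V) : Prop :=
  ∃ M, IsMatchingOf S M ∧ M.card = k ∧ ∀ A ∈ M, A ⊆ T

theorem hasMatchingIn_succ_union_iff {S : Finset (Finset V)} {F : Finset V} (hFS : F ∈ S)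
    (hF : F.Nonempty)
    (hmeet : ∀ H₁ ∈ S, ∀ H₂ ∈ S, (H₁ ∩ F).Nonempty → (H₂ ∩ F).Nonempty → (H₁ ∩ H₂).Nonempty)
    (k : ℕ) (T : Finset V) :
    HasMatchingIn S (k + 1) (T ∪ F) ↔ HasMatchingIn (S \ closedNbhd S F) k T := by
  constructor
  · rintro ⟨M, ⟨hMS, hdisj⟩, hcard, hMT⟩
    obtain ⟨H, hHM, hH⟩ : ∃ H ∈ M, ∀ B ∈ M, B ≠ H → Disjoint B F := by
      by_cases h : ∃ H ∈ M, (H ∩ F).Nonempty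
      · obtain ⟨H, hHM, hHF⟩ := h
        refine ⟨H, hHM, fun B hB hBH => Finset.disjoint_iff_inter_eq_empty.2 ?_⟩
        refine Finset.not_nonempty_iff_eq_empty.1 fun hBF => ?_
        exact (hmeet B (hMS hB) H (hMS hHM) hBF hHF).ne_empty (hdisj B hB H hHM hBH)
      · push Not at h
        obtain ⟨H, hHM⟩ := Finset.card_pos.1 (by rw [hcard]; exact k.succ_pos)
        exact ⟨H, hHM, fun B hB _ => Finset.disjoint_iff_inter_eq_empty.2 (h B hB)⟩
    have hH' : ∀ B ∈ M.erase H, Disjoint B F := fun B hB =>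
      hH B (Finset.mem_of_mem_erase hB) (Finset.ne_of_mem_erase hB)
    refine ⟨M.erase H, ⟨fun B hB => ?_, fun B hB C hC => ?_⟩, ?_, fun B hB => ?_⟩
    · exact (mem_sdiff_closedNbhd hF).2 ⟨hMS (Finset.mem_of_mem_erase hB), hH' B hB⟩
    · exact hdisj B (Finset.mem_of_mem_erase hB) C (Finset.mem_of_mem_erase hC)
    · rw [Finset.card_erase_of_mem hHM, hcard, Nat.add_sub_cancel]
    · exact Disjoint.left_le_of_le_sup_right (hMT B (Finset.mem_of_mem_erase hB)) (hH' B hB)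
  · rintro ⟨M, ⟨hMS, hdisj⟩, hcard, hMT⟩
    have hMF : ∀ B ∈ M, B ∈ S ∧ Disjoint B F := fun B hB =>
      (mem_sdiff_closedNbhd hF).1 (hMS hB)
    have hFM : F ∉ M := fun h => hF.ne_empty (disjoint_self.1 (hMF F h).2)
    refine ⟨insert F M, ⟨Finset.insert_subset hFS fun B hB => (hMF B hB).1, ?_⟩,
      by rw [Finset.card_insert_of_notMem hFM, hcard], ?_⟩
    · simp only [Finset.mem_insert]
      rintro B (rfl | hB) C (rfl | hC) hBC
      · exact absurd rfl hBC
      · exact Finset.disjoint_iff_inter_eq_empty.1 (hMF C hC).2.symm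
      · exact Finset.disjoint_iff_inter_eq_empty.1 (hMF B hB).2
      · exact hdisj B hB C hC hBC
    · simp only [Finset.forall_mem_insert]
      exact ⟨Finset.subset_union_right, fun B hB => (hMT B hB).trans Finset.subset_union_left⟩

theorem hasMatchingIn_of_bind_le {S : Finset (Finset V)} (hne : ∀ A ∈ S, A.Nonempty)
    {l : Multiset (Finset V)} (hlS : ∀ A ∈ l, A ∈ S) {T : Finset V}
    (hlT : l.bind Finset.val ≤ T.val) : HasMatchingIn S (Multiset.card l) T := by
  have hnodup : (l.bind Finset.val).Nodup := Multiset.nodup_of_le hlT T.nodup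
  have hdisj : ∀ A B t, l = A ::ₘ B ::ₘ t → Disjoint A B := by
    rintro A B t rfl
    simp only [Multiset.cons_bind, Multiset.nodup_add] at hnodup
    exact Finset.disjoint_val.1 (Multiset.disjoint_add_right.1 hnodup.2.2).1
  have hl : l.Nodup := Multiset.nodup_iff_ne_cons_cons.2 fun A t hA =>
    (hne A (hlS A (hA ▸ Multiset.mem_cons_self _ _))).ne_empty (disjoint_self.1 (hdisj A A t hA))
  refine ⟨l.toFinset, ⟨fun A hA => hlS A (Multiset.mem_toFinset.1 hA), fun A hA B hB hAB => ?_⟩,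
    Multiset.toFinset_card_of_nodup hl, fun A hA => ?_⟩
  · rw [Multiset.mem_toFinset] at hA hB
    have hBA : B ∈ l.erase A := (Multiset.mem_erase_of_ne (Ne.symm hAB)).2 hB
    refine Finset.disjoint_iff_inter_eq_empty.1 (hdisj A B ((l.erase A).erase B) ?_)
    rw [Multiset.cons_erase hBA, Multiset.cons_erase hA]
  · exact fun v hv => Multiset.subset_of_le hlT
      (Multiset.mem_bind.2 ⟨A, Multiset.mem_toFinset.1 hA, hv⟩)

theorem xMon_eq_monomial (T : Finset V) :
    xMon K T = monomial (Multiset.toFinsupp T.val) 1 := by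
  induction T using Finset.induction_on with
  | empty => simp [xMon]
  | insert a T ha ih =>
    rw [xMon, Finset.prod_insert ha, ← xMon, ih, Finset.insert_val_of_notMem ha,
      ← Multiset.singleton_add, Multiset.toFinsupp_add, Multiset.toFinsupp_singleton, X,
      monomial_mul, one_mul]

theorem toFinsupp_val_le_iff {T : Finset V} {a : V →₀ ℕ} :
    Multiset.toFinsupp T.val ≤ a ↔ T ⊆ a.support := by
  simp only [Finsupp.le_def, Multiset.toFinsupp_apply, Multiset.count_eq_of_nodup T.nodup,
    Finset.mem_val, Finset.subset_iff, Finsupp.mem_support_iff]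
  refine ⟨fun h v hv => ?_, fun h v => ?_⟩
  · have := h v
    rw [if_pos hv] at this
    omega
  · split_ifs with hv
    · exact Nat.one_le_iff_ne_zero.2 (h hv)
    · exact Nat.zero_le _

theorem mem_sqfreePow_iff (I : Ideal (MvPolynomial V K)) (k : ℕ) (p : MvPolynomial V K) :
    p ∈ sqfreePow K I k ↔ ∀ a ∈ p.support, xMon K a.support ∈ I ^ k := by
  have hgen : {q | (∃ T, q = xMon K T) ∧ q ∈ I ^ k} = (fun e => monomial e (1 : K)) ''
      ((fun T : Finset V => Multiset.toFinsupp T.val) '' {T | xMon K T ∈ I ^ k}) := by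
    ext q
    simp only [Set.mem_ofPred_eq, Set.image_image, Set.mem_image, ← xMon_eq_monomial]
    constructor
    · rintro ⟨⟨T, rfl⟩, hT⟩
      exact ⟨T, hT, rfl⟩
    · rintro ⟨T, hT, rfl⟩
      exact ⟨⟨T, rfl⟩, hT⟩
  rw [sqfreePow, hgen, mem_ideal_span_monomial_image]
  refine forall₂_congr fun a _ =>
    ⟨?_, fun h => ⟨_, ⟨a.support, h, rfl⟩, toFinsupp_val_le_iff.2 subset_rfl⟩⟩
  rintro ⟨_, ⟨T, hT, rfl⟩, hTa⟩
  exact Ideal.mem_of_dvd _ (xMon_dvd_xMon K (toFinsupp_val_le_iff.1 hTa)) hT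

theorem facetIdealOf_pow_le (S : Finset (Finset V)) (k : ℕ) :
    facetIdealOf K S ^ k ≤ Ideal.span ((fun e => monomial e (1 : K)) ''
      {e | ∃ l : Multiset (Finset V), (∀ A ∈ l, A ∈ S) ∧ Multiset.card l = k ∧
        e = Multiset.toFinsupp (l.bind Finset.val)}) := by
  induction k with
  | zero =>
    rw [pow_zero, Ideal.one_eq_top, top_le_iff, Ideal.eq_top_iff_one]
    exact Ideal.subset_span ⟨0, ⟨0, by simp, rfl, by simp⟩, by simp⟩
  | succ k ih =>
    have hS : facetIdealOf K S ≤ Ideal.span ((fun e => monomial e (1 : K)) ''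
        ((fun T : Finset V => Multiset.toFinsupp T.val) '' S)) := by
      refine Ideal.span_le.2 ?_
      rintro _ ⟨A, hA, rfl⟩
      exact Ideal.subset_span ⟨_, ⟨A, hA, rfl⟩, (xMon_eq_monomial K A).symm⟩
    rw [pow_succ]
    refine (Ideal.mul_mono ih hS).trans ?_
    rw [Ideal.span_mul_span']
    refine Ideal.span_mono ?_
    rintro _ ⟨_, ⟨_, ⟨l, hl, hcard, rfl⟩, rfl⟩, _, ⟨_, ⟨A, hA, rfl⟩, rfl⟩, rfl⟩
    refine ⟨_, ⟨A ::ₘ l, ?_, by rw [Multiset.card_cons, hcard], rfl⟩, ?_⟩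
    · exact Multiset.forall_mem_cons.2 ⟨hA, hl⟩
    · dsimp only
      rw [monomial_mul, one_mul, Multiset.cons_bind, Multiset.toFinsupp_add, add_comm]

theorem xMon_mem_facetIdealOf_pow_iff {S : Finset (Finset V)} (hne : ∀ A ∈ S, A.Nonempty)
    (k : ℕ) (T : Finset V) : xMon K T ∈ facetIdealOf K S ^ k ↔ HasMatchingIn S k T := by
  constructor
  · intro h
    have := facetIdealOf_pow_le K S k h
    rw [xMon_eq_monomial, mem_ideal_span_monomial_image] at this
    obtain ⟨_, ⟨l, hlS, rfl, rfl⟩, hle⟩ := this (Multiset.toFinsupp T.val) (by simp)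
    refine hasMatchingIn_of_bind_le hne hlS ?_
    simpa [Finsupp.le_def, Multiset.le_iff_count] using hle
  · rintro ⟨M, ⟨hMS, hdisj⟩, rfl, hMT⟩
    have hprod : ∏ A ∈ M, xMon K A ∈ facetIdealOf K S ^ M.card := by
      rw [← Finset.prod_const]
      exact Ideal.prod_mem_prod fun A hA => Ideal.subset_span ⟨A, hMS hA, rfl⟩
    have hunion : xMon K (M.biUnion id) = ∏ A ∈ M, xMon K A :=
      Finset.prod_biUnion fun A hA B hB hAB =>
        Finset.disjoint_iff_inter_eq_empty.2 (hdisj A hA B hB hAB)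
    rw [← hunion] at hprod
    exact Ideal.mem_of_dvd _ (xMon_dvd_xMon K (Finset.biUnion_subset.2 hMT)) hprod

theorem colon_sqfreePow_facetIdealOf {S : Finset (Finset V)} (hne : ∀ A ∈ S, A.Nonempty)
    {F : Finset V} (hFS : F ∈ S)
    (hmeet : ∀ H₁ ∈ S, ∀ H₂ ∈ S, (H₁ ∩ F).Nonempty → (H₂ ∩ F).Nonempty → (H₁ ∩ H₂).Nonempty)
    (k : ℕ) :
    (sqfreePow K (facetIdealOf K S) (k + 1)).colon (Ideal.span {xMon K F}) =
      sqfreePow K (facetIdealOf K (S \ closedNbhd S F)) k := by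
  have hne' : ∀ A ∈ S \ closedNbhd S F, A.Nonempty := fun A hA => hne A (Finset.mem_sdiff.1 hA).1
  ext p
  rw [Ideal.mem_colon_span_singleton, mem_sqfreePow_iff, mem_sqfreePow_iff, xMon_eq_monomial,
    support_mul_monomial_one, Finset.forall_mem_map]
  refine forall₂_congr fun a _ => ?_
  rw [addRightEmbedding_apply, Finsupp.support_add_eq_union, Multiset.toFinsupp_support,
    Finset.val_toFinset, xMon_mem_facetIdealOf_pow_iff K hne, xMon_mem_facetIdealOf_pow_iff K hne']
  exact hasMatchingIn_succ_union_iff hFS (hne F hFS) hmeet k a.support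

end

section Statements

variable {V : Type} [Fintype V] [DecidableEq V] (K : Type) [Field K]

theorem stmt9 (Δ : SimplicialComplexOn V)
    (hCM : IsCMForestFacets Δ.facets)
    (F : Finset V) (hF : IsLeafOf Δ.facets F) :
    ∀ k : ℕ, 1 ≤ k → k ≤ matchingNumberOf Δ.facets →
      (sqfreePow K (facetIdealOf K Δ.facets) k).colon (Ideal.span {xMon K F}) =
        sqfreePow K (facetIdealOf K (Δ.facets \ closedNbhd Δ.facets F)) (k - 1) := by
  rintro k hk -
  obtain ⟨k, rfl⟩ : ∃ j, k = j + 1 := ⟨k - 1, by omega⟩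
  rw [Nat.add_sub_cancel]
  exact colon_sqfreePow_facetIdealOf K Δ.nonempty_facet hF.1
    (fun H₁ h₁ H₂ h₂ => hCM.2.inter_nonempty_of_inter_leaf_nonempty Δ.antichain hF h₁ h₂) k

end Statements
end

section
/- Let Δ be a simplicial forest and let A ⊆ V(Δ). Then the contraction Δ_A is a simplicial forest. -/
open MvPolynomial

variable {V : Type} [Fintype V] [DecidableEq V]

variable (K : Type) [Field K]

section Statements

variable {V : Type} [Fintype V] [DecidableEq V] (K : Type) [Field K]

theorem stmt13 (Δ : SimplicialComplexOn V) (hforest : HasLeafProp Δ.facets)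
    (A : Finset V) :
    HasLeafProp (contraction Δ.facets A) := by
  classical
  set S := Δ.facets with hS
  intro T hT hTne
  -- choose a representative in S for each element of the contraction
  have hrep : ∀ t ∈ T, ∃ F ∈ S, F \ A = t := by
    intro t ht
    have := hT ht
    simp only [contraction, Finset.mem_filter, Finset.mem_image] at this
    obtain ⟨⟨F, hF, hFA⟩, -⟩ := this
    exact ⟨F, hF, hFA⟩
  let f : Finset V → Finset V := fun t =>
    if h : ∃ F ∈ S, F \ A = t then h.choose else ∅
  have hfS : ∀ t ∈ T, f t ∈ S := by
    intro t ht
    have h := hrep t ht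
    simp only [f, dif_pos h]
    exact h.choose_spec.1
  have hfA : ∀ t ∈ T, f t \ A = t := by
    intro t ht
    have h := hrep t ht
    simp only [f, dif_pos h]
    exact h.choose_spec.2
  set S' : Finset (Finset V) := T.image f with hS'
  have hS'sub : S' ⊆ S := by
    intro F hF
    simp only [hS', Finset.mem_image] at hF
    obtain ⟨t, ht, rfl⟩ := hF
    exact hfS t ht
  have hS'ne : S'.Nonempty := hTne.image f
  obtain ⟨F, hFS', hleaf⟩ := hforest S' hS'sub hS'ne
  simp only [hS', Finset.mem_image] at hFS'
  obtain ⟨t₀, ht₀, rfl⟩ := hFS'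
  refine ⟨t₀, ht₀, ?_⟩
  have ht₀A : f t₀ \ A = t₀ := hfA t₀ ht₀
  have hmemS' : ∀ t ∈ T, f t ∈ S' := fun t ht => Finset.mem_image_of_mem f ht
  have hsdiff : ∀ X Y : Finset V, (X \ A) ∩ (Y \ A) = (X ∩ Y) \ A := by
    intro X Y
    ext v
    simp only [Finset.mem_inter, Finset.mem_sdiff]
    tauto
  rcases hleaf with hsingle | ⟨G, hGS', hGne, hjoint⟩
  · left
    intro t ht
    have := hsingle (f t) (hmemS' t ht)
    calc t = f t \ A := (hfA t ht).symm
    _ = f t₀ \ A := by rw [this]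
    _ = t₀ := ht₀A
  · right
    simp only [hS', Finset.mem_image] at hGS'
    obtain ⟨t₁, ht₁, rfl⟩ := hGS'
    have ht₁A : f t₁ \ A = t₁ := hfA t₁ ht₁
    refine ⟨t₁, ht₁, ?_, ?_⟩
    · intro h; apply hGne; rw [h]
    · intro H hH hHne
      have hfHne : f H ≠ f t₀ := by
        intro h
        apply hHne
        rw [← hfA H hH, h, ht₀A]
      have hsub := hjoint (f H) (hmemS' H hH) hfHne
      calc t₀ ∩ H = (f t₀ \ A) ∩ (f H \ A) := by rw [ht₀A, hfA H hH]
      _ = (f t₀ ∩ f H) \ A := hsdiff _ _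
      _ ⊆ (f t₀ ∩ f t₁) \ A := Finset.sdiff_subset_sdiff hsub (le_refl A)
      _ = (f t₀ \ A) ∩ (f t₁ \ A) := (hsdiff _ _).symm
      _ = t₀ ∩ t₁ := by rw [ht₀A, ht₁A]

end Statements
end

section
/- Let Δ = ⟨F_1,…,F_r⟩ ∪ ⟨G_1,…,G_s⟩ be a Cohen-Macaulay simplicial forest, let F₁ be a special leaf of Δ with F₁ ∩ G_j ≠ ∅ for some j, and set A = ⋂_{j : F₁∩G_j ≠ ∅}(F₁ ∩ G_j). Then F₁ ∖ A is a special leaf of the Cohen-Macaulay simplicial forest Δ_A. -/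
open MvPolynomial

variable {V : Type} [Fintype V] [DecidableEq V]

variable (K : Type) [Field K]

section AuxBasic

variable {V : Type} [Fintype V] [DecidableEq V]

open Finset

lemma sdiff_inter_sdiff' (H K A : Finset V) : (H \ A) ∩ (K \ A) = (H ∩ K) \ A := by
  ext v; simp only [Finset.mem_inter, Finset.mem_sdiff]; tauto

lemma mem_contraction {S : Finset (Finset V)} {A X : Finset V} :
    X ∈ contraction S A ↔ (∃ H ∈ S, H \ A = X) ∧ ∀ G ∈ S, G \ A ⊆ X → G \ A = X := by
  unfold contraction
  simp only [Finset.mem_filter, Finset.mem_image]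

lemma contraction_empty {S : Finset (Finset V)}
    (hac : ∀ F ∈ S, ∀ G ∈ S, F ⊆ G → F = G) : contraction S (∅ : Finset V) = S := by
  ext X
  rw [mem_contraction]
  simp only [Finset.sdiff_empty]
  constructor
  · rintro ⟨⟨H, hH, rfl⟩, -⟩; exact hH
  · intro hX
    exact ⟨⟨X, hX, rfl⟩, fun G hG hsub => hac G hG X hX hsub⟩

lemma exists_chain_max {β : Type*} [DecidableEq β] (f : β → Finset V) :
    ∀ (T : Finset β), T.Nonempty →
    (∀ x ∈ T, ∀ y ∈ T, f x ⊆ f y ∨ f y ⊆ f x) →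
    ∃ x₀ ∈ T, ∀ x ∈ T, f x ⊆ f x₀ := by
  intro T
  induction T using Finset.induction_on with
  | empty => intro h; exact absurd h (by simp)
  | @insert a T ha ih =>
    intro _ hchain
    rcases T.eq_empty_or_nonempty with rfl | hTne
    · exact ⟨a, by simp, by simp⟩
    · obtain ⟨m, hmT, hm⟩ := ih hTne (fun x hx y hy =>
        hchain x (Finset.mem_insert_of_mem hx) y (Finset.mem_insert_of_mem hy))
      rcases hchain a (Finset.mem_insert_self a T) m (Finset.mem_insert_of_mem hmT) with h | h
      · refine ⟨m, Finset.mem_insert_of_mem hmT, ?_⟩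
        intro x hx
        rcases Finset.mem_insert.mp hx with rfl | hx
        · exact h
        · exact hm x hx
      · refine ⟨a, Finset.mem_insert_self a T, ?_⟩
        intro x hx
        rcases Finset.mem_insert.mp hx with rfl | hx
        · exact Finset.Subset.refl _
        · exact (hm x hx).trans h

lemma free_vertex {S : Finset (Finset V)}
    (hac : ∀ F ∈ S, ∀ G ∈ S, F ⊆ G → F = G)
    {F : Finset V} (hFne : F.Nonempty) (hF : IsLeafOf S F) :
    ∃ v ∈ F, ∀ H ∈ S, H ≠ F → v ∉ H := by
  obtain ⟨hFS, hall | ⟨J, hJS, hJF, hJ⟩⟩ := hF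
  · obtain ⟨v, hv⟩ := hFne
    exact ⟨v, hv, fun H hH hHF => absurd (hall H hH) hHF⟩
  · have hnsub : ¬ F ⊆ J := fun hsub => hJF (hac F hFS J hJS hsub).symm
    obtain ⟨v, hvF, hvJ⟩ := Finset.not_subset.mp hnsub
    refine ⟨v, hvF, fun H hH hHF hvH => ?_⟩
    have := hJ H hH hHF (Finset.mem_inter.mpr ⟨hvF, hvH⟩)
    exact hvJ (Finset.mem_inter.mp this).2

lemma IsGrafted.exists_decomp {S : Finset (Finset V)} (h : IsGrafted S) :
    ∃ Fs Gs, IsGraftingDecomp S Fs Gs := by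
  cases h with
  | intro S Fs Gs h1 h2 h3 h4 h5 h6 => exact ⟨Fs, Gs, h1, h2, h3, h4, h5, h6⟩

/-- non-leaves of a grafted complex stay non-leaves in subcomplexes containing all leaves -/
lemma nonleaf_of_subset {S : Finset (Finset V)} (hg : IsGrafted S)
    (hne : ∀ F ∈ S, F.Nonempty)
    {T : Finset (Finset V)} (hTS : T ⊆ S) (hlT : ∀ L, IsLeafOf S L → L ∈ T)
    {H : Finset V} (hHT : H ∈ T) (hHn : ¬ IsLeafOf S H) : ¬ IsLeafOf T H := by
  obtain ⟨Fs, Gs, hunion, hdisj, hcover, hleaves, hFdisj, hrec⟩ := hg.exists_decomp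
  have hHS : H ∈ S := hTS hHT
  have hHGs : H ∈ Gs := by
    rw [hunion] at hHS
    rcases Finset.mem_union.mp hHS with h | h
    · exact absurd ((hleaves H).mpr h) hHn
    · exact h
  intro hleafT
  obtain ⟨-, hall | ⟨J, hJT, hJH, hJ⟩⟩ := hleafT
  · -- T = {H}; but some leaf of S is in T
    obtain ⟨v, hv⟩ := hne H (hTS hHT)
    obtain ⟨L, hLFs, hvL⟩ := hcover H hHGs v hv
    have hLT : L ∈ T := hlT L ((hleaves L).mpr hLFs)
    have : L = H := hall L hLT
    exact hHn ((hleaves H).mpr (this ▸ hLFs))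
  · apply hHn
    refine ⟨hTS hHT, Or.inr ⟨J, hTS hJT, hJH, fun K hKS hKH => ?_⟩⟩
    intro v hv
    obtain ⟨hvH, hvK⟩ := Finset.mem_inter.mp hv
    obtain ⟨L, hLFs, hvL⟩ := hcover H hHGs v hvH
    have hLleaf : IsLeafOf S L := (hleaves L).mpr hLFs
    have hLT : L ∈ T := hlT L hLleaf
    have hLH : L ≠ H := by
      intro h; subst h
      exact (Finset.disjoint_left.mp hdisj hLFs) hHGs
    have := hJ L hLT hLH (Finset.mem_inter.mpr ⟨hvH, hvL⟩)
    exact Finset.mem_inter.mpr ⟨hvH, (Finset.mem_inter.mp this).2⟩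

lemma isGrafted_sdiff {S : Finset (Finset V)} :
    ∀ (E : Finset (Finset V)), IsGrafted S → (∀ F ∈ S, F.Nonempty) → E ⊆ S →
    (∀ e ∈ E, ¬ IsLeafOf S e) → IsGrafted (S \ E) := by
  intro E
  induction E using Finset.induction_on generalizing S with
  | empty => intro hg _ _ _; simpa using hg
  | @insert a E ha ih =>
    intro hg hne hES hEn
    obtain ⟨Fs, Gs, hunion, hdisj, hcover, hleaves, hFdisj, hrec⟩ := hg.exists_decomp
    have haS : a ∈ S := hES (Finset.mem_insert_self a E)
    have haGs : a ∈ Gs := by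
      have := haS; rw [hunion] at this
      rcases Finset.mem_union.mp this with h | h
      · exact absurd ((hleaves a).mpr h) (hEn a (Finset.mem_insert_self a E))
      · exact h
    have hgE : IsGrafted (S.erase a) := hrec a haGs
    have hkey : IsGrafted ((S.erase a) \ E) := by
      apply ih hgE
      · exact fun F hF => hne F (Finset.mem_of_mem_erase hF)
      · intro e he
        refine Finset.mem_erase.mpr ⟨?_, hES (Finset.mem_insert_of_mem he)⟩
        intro h; exact ha (h ▸ he)
      · intro e he
        apply nonleaf_of_subset hg hne (Finset.erase_subset a S)
        · intro L hL
          refine Finset.mem_erase.mpr ⟨?_, hL.1⟩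
          intro h
          exact (hEn a (Finset.mem_insert_self a E)) (h ▸ hL)
        · refine Finset.mem_erase.mpr ⟨?_, hES (Finset.mem_insert_of_mem he)⟩
          intro h; exact ha (h ▸ he)
        · exact hEn e (Finset.mem_insert_of_mem he)
    have : (S.erase a) \ E = S \ insert a E := by
      ext x
      simp only [Finset.mem_sdiff, Finset.mem_erase, Finset.mem_insert]
      tauto
    rwa [this] at hkey

end AuxBasic

section AuxGood
set_option linter.unusedSectionVars false

variable {V : Type} [Fintype V] [DecidableEq V]

open Finset

/-- In a grafted complex, every leaf is a good leaf. -/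
lemma good_leaf : ∀ (n : ℕ) (S : Finset (Finset V)), S.card ≤ n →
    (∀ F ∈ S, F.Nonempty) → (∀ F ∈ S, ∀ G ∈ S, F ⊆ G → F = G) → IsGrafted S →
    ∀ F, IsLeafOf S F → ∀ T ⊆ S, F ∈ T → IsLeafOf T F := by
  intro n
  induction n with
  | zero =>
    intro S hcard _ _ _ F hF T hT hFT
    rw [Nat.le_zero, Finset.card_eq_zero] at hcard
    exact absurd hF.1 (by simp [hcard])
  | succ n ih =>
    intro S hcard hne hac hg F hF T hT hFT
    obtain ⟨Fs, Gs, hunion, hdisj, hcover, hleaves, hFdisj, hrec⟩ := hg.exists_decomp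
    by_cases hex : ∃ X ∈ Gs, X ∉ T
    · obtain ⟨X, hXGs, hXT⟩ := hex
      have hXS : X ∈ S := by rw [hunion]; exact Finset.mem_union_right _ hXGs
      have hFX : F ≠ X := by
        intro h
        exact Finset.disjoint_left.mp hdisj ((hleaves F).mp hF) (h ▸ hXGs)
      have hgE : IsGrafted (S.erase X) := hrec X hXGs
      have hFE : F ∈ S.erase X := Finset.mem_erase.mpr ⟨hFX, hF.1⟩
      have hFleafE : IsLeafOf (S.erase X) F := by
        obtain ⟨hFS, hall | ⟨J, hJS, hJF, hJ⟩⟩ := hF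
        · exact absurd (hall X hXS) (fun h => hFX h.symm)
        · by_cases hJX : J = X
          · subst hJX
            by_contra hnot
            obtain ⟨v, hvF, hvfree⟩ := free_vertex hac (hne F hFS) ⟨hFS, Or.inr ⟨J, hJS, hJF, hJ⟩⟩
            obtain ⟨Fs₂, Gs₂, hu₂, hd₂, hc₂, hl₂, _, _⟩ := hgE.exists_decomp
            have hFGs₂ : F ∈ Gs₂ := by
              have hF2 : F ∈ Fs₂ ∪ Gs₂ := hu₂ ▸ hFE
              rcases Finset.mem_union.mp hF2 with h | h
              · exact absurd ((hl₂ F).mpr h) hnot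
              · exact h
            obtain ⟨L, hLFs₂, hvL⟩ := hc₂ F hFGs₂ v hvF
            have hLS : L ∈ S := Finset.mem_of_mem_erase (hu₂ ▸ Finset.mem_union_left _ hLFs₂)
            have hLF : L ≠ F := by
              intro h
              exact Finset.disjoint_left.mp hd₂ (h ▸ hLFs₂) hFGs₂
            exact hvfree L hLS hLF hvL
          · exact ⟨hFE, Or.inr ⟨J, Finset.mem_erase.mpr ⟨hJX, hJS⟩, hJF,
              fun H hH hHF => hJ H (Finset.mem_of_mem_erase hH) hHF⟩⟩
      have hcard' : (S.erase X).card ≤ n := by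
        have := Finset.card_erase_of_mem hXS
        omega
      refine ih (S.erase X) hcard' (fun G hG => hne G (Finset.mem_of_mem_erase hG))
        (fun G hG G' hG' => hac G (Finset.mem_of_mem_erase hG) G' (Finset.mem_of_mem_erase hG'))
        hgE F hFleafE T ?_ hFT
      intro x hx
      exact Finset.mem_erase.mpr ⟨fun h => hXT (h ▸ hx), hT hx⟩
    · push_neg at hex
      obtain ⟨hFS, hall | ⟨J, hJS, hJF, hJ⟩⟩ := hF
      · exact ⟨hFT, Or.inl fun H hH => hall H (hT hH)⟩
      · have hJcase : J ∈ Fs ∨ J ∈ Gs := Finset.mem_union.mp (hunion ▸ hJS)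
        rcases hJcase with hJFs | hJGs
        · -- J is a leaf: F ∩ J = ∅
          have hFFs : F ∈ Fs := (hleaves F).mp ⟨hFS, Or.inr ⟨J, hJS, hJF, hJ⟩⟩
          have hFJ : F ∩ J = ∅ := hFdisj F hFFs J hJFs (fun h => hJF h.symm)
          by_cases hex2 : ∃ H ∈ T, H ≠ F
          · obtain ⟨H₀, hH₀T, hH₀F⟩ := hex2
            refine ⟨hFT, Or.inr ⟨H₀, hH₀T, hH₀F, fun H hH hHF => ?_⟩⟩
            intro v hv
            have := hJ H (hT hH) hHF hv
            rw [hFJ] at this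
            exact absurd this (Finset.notMem_empty v)
          · push_neg at hex2
            exact ⟨hFT, Or.inl hex2⟩
        · exact ⟨hFT, Or.inr ⟨J, hex J hJGs, hJF, fun H hH hHF => hJ H (hT hH) hHF⟩⟩

lemma leaf_inter_chain {S : Finset (Finset V)}
    (hne : ∀ F ∈ S, F.Nonempty) (hac : ∀ F ∈ S, ∀ G ∈ S, F ⊆ G → F = G)
    (hg : IsGrafted S) {F : Finset V} (hF : IsLeafOf S F)
    {H K : Finset V} (hH : H ∈ S) (hK : K ∈ S) :
    F ∩ H ⊆ F ∩ K ∨ F ∩ K ⊆ F ∩ H := by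
  classical
  by_cases hHF : H = F
  · subst hHF; right; rw [Finset.inter_self]; exact Finset.inter_subset_left
  by_cases hKF : K = F
  · subst hKF; left; rw [Finset.inter_self]; exact Finset.inter_subset_left
  set T : Finset (Finset V) := {F, H, K} with hT
  have hTS : T ⊆ S := by
    intro x hx
    rcases Finset.mem_insert.mp hx with rfl | hx
    · exact hF.1
    rcases Finset.mem_insert.mp hx with rfl | hx
    · exact hH
    · rw [Finset.mem_singleton] at hx; exact hx ▸ hK
  have hFT : F ∈ T := Finset.mem_insert_self _ _
  have hHT : H ∈ T := Finset.mem_insert_of_mem (Finset.mem_insert_self _ _)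
  have hKT : K ∈ T := Finset.mem_insert_of_mem (Finset.mem_insert_of_mem (Finset.mem_singleton_self _))
  have hleafT := good_leaf S.card S le_rfl hne hac hg F hF T hTS hFT
  obtain ⟨-, hall | ⟨J, hJT, hJF, hJ⟩⟩ := hleafT
  · exact absurd (hall H hHT) hHF
  · have : J = F ∨ J = H ∨ J = K := by
      rcases Finset.mem_insert.mp hJT with h | h
      · exact Or.inl h
      rcases Finset.mem_insert.mp h with h | h
      · exact Or.inr (Or.inl h)
      · exact Or.inr (Or.inr (Finset.mem_singleton.mp h))
    rcases this with rfl | rfl | rfl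
    · exact absurd rfl hJF
    · right; exact hJ K hKT hKF
    · left; exact hJ H hHT hHF

end AuxGood

section AuxM
set_option linter.unusedSectionVars false

variable {V : Type} [Fintype V] [DecidableEq V]

open Finset

/-- Hypothesis bundle for the contraction lemma. -/
structure MHyp (S : Finset (Finset V)) (F₁ A : Finset V) : Prop where
  hne : ∀ F ∈ S, F.Nonempty
  hac : ∀ F ∈ S, ∀ G ∈ S, F ⊆ G → F = G
  hg : IsGrafted S
  hF₁ : F₁ ∈ S
  hAF : A ⊆ F₁
  hAne : A.Nonempty
  hF₁A : (F₁ \ A).Nonempty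
  h2 : ∀ H ∈ S, H ≠ F₁ → (H ∩ F₁).Nonempty → A ⊆ H

namespace MHyp

variable {S : Finset (Finset V)} {F₁ A : Finset V} (h : MHyp S F₁ A)

include h

/-- every facet either contains `A` or is disjoint from it -/
lemma B1 : ∀ H ∈ S, A ⊆ H ∨ A ∩ H = ∅ := by
  intro H hH
  by_cases hHF₁ : H = F₁
  · exact Or.inl (hHF₁ ▸ h.hAF)
  by_cases hsub : A ⊆ H
  · exact Or.inl hsub
  · right
    by_contra hne'
    obtain ⟨v, hv⟩ := Finset.nonempty_iff_ne_empty.mpr hne'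
    obtain ⟨hvA, hvH⟩ := Finset.mem_inter.mp hv
    exact hsub (h.h2 H hH hHF₁ ⟨v, Finset.mem_inter.mpr ⟨hvH, h.hAF hvA⟩⟩)

/-- `F₁` is a leaf. -/
lemma leafF₁ : IsLeafOf S F₁ := by
  obtain ⟨Fs, Gs, hunion, hdisj, hcover, hleaves, hFdisj, hrec⟩ := h.hg.exists_decomp
  by_contra hn
  have hF₁Gs : F₁ ∈ Gs := by
    have := h.hF₁; rw [hunion] at this
    rcases Finset.mem_union.mp this with hh | hh
    · exact absurd ((hleaves F₁).mpr hh) hn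
    · exact hh
  obtain ⟨a, haA⟩ := h.hAne
  have haF₁ : a ∈ F₁ := h.hAF haA
  have key : ∀ v ∈ F₁, ∃ L ∈ Fs, v ∈ L ∧ a ∈ L := by
    intro v hv
    obtain ⟨L, hLFs, hvL⟩ := hcover F₁ hF₁Gs v hv
    have hLS : L ∈ S := hunion ▸ Finset.mem_union_left _ hLFs
    have hLF₁ : L ≠ F₁ := by
      intro hh; subst hh
      exact (fun hh => hn ((hleaves L).mpr hLFs)) hLFs
    have hAL : A ⊆ L := h.h2 L hLS hLF₁ ⟨v, Finset.mem_inter.mpr ⟨hvL, hv⟩⟩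
    exact ⟨L, hLFs, hvL, hAL haA⟩
  obtain ⟨L₀, hL₀Fs, haL₀, -⟩ := key a haF₁
  have hsub : F₁ ⊆ L₀ := by
    intro v hv
    obtain ⟨L, hLFs, hvL, haL⟩ := key v hv
    have : L = L₀ := by
      by_contra hne'
      have := hFdisj L hLFs L₀ hL₀Fs hne'
      exact absurd (this ▸ Finset.mem_inter.mpr ⟨haL, haL₀⟩) (Finset.notMem_empty a)
    exact this ▸ hvL
  have hL₀S : L₀ ∈ S := hunion ▸ Finset.mem_union_left _ hL₀Fs
  have : F₁ = L₀ := h.hac F₁ h.hF₁ L₀ hL₀S hsub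
  exact hn ((hleaves F₁).mpr (this ▸ hL₀Fs))

/-- leaves other than `F₁` are disjoint from `A` -/
lemma leaf_disj_A : ∀ F, IsLeafOf S F → F ≠ F₁ → A ∩ F = ∅ := by
  intro F hF hFne
  obtain ⟨Fs, Gs, hunion, hdisj, hcover, hleaves, hFdisj, hrec⟩ := h.hg.exists_decomp
  have h₁ : F₁ ∈ Fs := (hleaves F₁).mp h.leafF₁
  have h₂ : F ∈ Fs := (hleaves F).mp hF
  have hd := hFdisj F₁ h₁ F h₂ (fun hh => hFne hh.symm)
  apply Finset.eq_empty_of_forall_notMem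
  intro v hv
  obtain ⟨hvA, hvF⟩ := Finset.mem_inter.mp hv
  exact absurd (hd ▸ Finset.mem_inter.mpr ⟨h.hAF hvA, hvF⟩) (Finset.notMem_empty v)

lemma imgNe : ∀ H ∈ S, (H \ A).Nonempty := by
  intro H hH
  by_contra hn
  rw [Finset.not_nonempty_iff_eq_empty, Finset.sdiff_eq_empty_iff_subset] at hn
  have : H = F₁ := h.hac H hH F₁ h.hF₁ (hn.trans h.hAF)
  subst this
  obtain ⟨v, hv⟩ := h.hF₁A
  exact absurd ((Finset.mem_sdiff.mp hv).1) (fun hh => (Finset.mem_sdiff.mp hv).2 (hn hh))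

lemma imgInj : ∀ H ∈ S, ∀ K ∈ S, H \ A = K \ A → H = K := by
  intro H hH K hK heq
  rcases h.B1 H hH with hAH | hAH <;> rcases h.B1 K hK with hAK | hAK
  · calc H = H \ A ∪ A := (Finset.sdiff_union_of_subset hAH).symm
      _ = K \ A ∪ A := by rw [heq]
      _ = K := Finset.sdiff_union_of_subset hAK
  · -- A ⊆ H, A ∩ K = ∅
    have hK' : K \ A = K := by
      rw [Finset.sdiff_eq_self_iff_disjoint]
      rw [Finset.disjoint_right]
      intro v hvA hvK
      exact absurd (Finset.mem_inter.mpr ⟨hvA, hvK⟩) (hAK ▸ Finset.notMem_empty v)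
    have hsub : K ⊆ H := by rw [← hK', ← heq]; exact Finset.sdiff_subset
    have : K = H := h.hac K hK H hH hsub
    subst this
    obtain ⟨a, haA⟩ := h.hAne
    exact absurd (Finset.mem_inter.mpr ⟨haA, hAH haA⟩) (hAK ▸ Finset.notMem_empty a)
  · have hH' : H \ A = H := by
      rw [Finset.sdiff_eq_self_iff_disjoint, Finset.disjoint_right]
      intro v hvA hvH
      exact absurd (Finset.mem_inter.mpr ⟨hvA, hvH⟩) (hAH ▸ Finset.notMem_empty v)
    have hsub : H ⊆ K := by rw [← hH', heq]; exact Finset.sdiff_subset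
    have : H = K := h.hac H hH K hK hsub
    subst this
    obtain ⟨a, haA⟩ := h.hAne
    exact absurd (Finset.mem_inter.mpr ⟨haA, hAK haA⟩) (hAH ▸ Finset.notMem_empty a)
  · have hH' : H \ A = H := by
      rw [Finset.sdiff_eq_self_iff_disjoint, Finset.disjoint_right]
      intro v hvA hvH
      exact absurd (Finset.mem_inter.mpr ⟨hvA, hvH⟩) (hAH ▸ Finset.notMem_empty v)
    have hK' : K \ A = K := by
      rw [Finset.sdiff_eq_self_iff_disjoint, Finset.disjoint_right]
      intro v hvA hvK
      exact absurd (Finset.mem_inter.mpr ⟨hvA, hvK⟩) (hAK ▸ Finset.notMem_empty v)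
    rw [← hH', ← hK', heq]

/-- structure of containments between images -/
lemma containment {H K : Finset V} (hH : H ∈ S) (hK : K ∈ S) (hne' : H ≠ K)
    (hsub : K \ A ⊆ H \ A) :
    A ⊆ K ∧ A ∩ H = ∅ ∧ H ≠ F₁ ∧ K ∩ F₁ = A ∧ K ≠ F₁ := by
  have hAK : A ⊆ K := by
    rcases h.B1 K hK with hh | hh
    · exact hh
    · exfalso
      have hK' : K \ A = K := by
        rw [Finset.sdiff_eq_self_iff_disjoint, Finset.disjoint_right]
        intro v hvA hvK
        exact absurd (Finset.mem_inter.mpr ⟨hvA, hvK⟩) (hh ▸ Finset.notMem_empty v)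
      have : K ⊆ H := (hK' ▸ hsub).trans Finset.sdiff_subset
      exact hne'.symm (h.hac K hK H hH this)
  have hAH : A ∩ H = ∅ := by
    rcases h.B1 H hH with hh | hh
    · exfalso
      have : K ⊆ H := by
        intro v hv
        by_cases hvA : v ∈ A
        · exact hh hvA
        · exact (Finset.mem_sdiff.mp (hsub (Finset.mem_sdiff.mpr ⟨hv, hvA⟩))).1
      exact hne'.symm (h.hac K hK H hH this)
    · exact hh
  have hHF₁ : H ≠ F₁ := by
    intro hh; subst hh
    obtain ⟨a, haA⟩ := h.hAne
    exact absurd (Finset.mem_inter.mpr ⟨haA, h.hAF haA⟩) (hAH ▸ Finset.notMem_empty a)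
  have hKF₁int : K ∩ F₁ = A := by
    apply Finset.Subset.antisymm
    · intro v hv
      obtain ⟨hvK, hvF₁⟩ := Finset.mem_inter.mp hv
      by_contra hvA
      have hvH : v ∈ H := (Finset.mem_sdiff.mp (hsub (Finset.mem_sdiff.mpr ⟨hvK, hvA⟩))).1
      have := h.h2 H hH hHF₁ ⟨v, Finset.mem_inter.mpr ⟨hvH, hvF₁⟩⟩
      obtain ⟨a, haA⟩ := h.hAne
      exact absurd (Finset.mem_inter.mpr ⟨haA, this haA⟩) (hAH ▸ Finset.notMem_empty a)
    · intro v hv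
      exact Finset.mem_inter.mpr ⟨hAK hv, h.hAF hv⟩
  have hKF₁ : K ≠ F₁ := by
    intro hh; subst hh
    rw [Finset.inter_self] at hKF₁int
    obtain ⟨v, hv⟩ := h.hF₁A
    obtain ⟨hv1, hv2⟩ := Finset.mem_sdiff.mp hv
    exact hv2 (hKF₁int ▸ hv1)
  exact ⟨hAK, hAH, hHF₁, hKF₁int, hKF₁⟩

/-- facets containing `A` have minimal images -/
lemma img_mem_contraction {K : Finset V} (hK : K ∈ S) (hAK : A ⊆ K) :
    K \ A ∈ contraction S A := by
  rw [mem_contraction]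
  refine ⟨⟨K, hK, rfl⟩, fun L hL hsub => ?_⟩
  by_contra hne'
  have hLK : L ≠ K := fun hh => hne' (hh ▸ rfl)
  obtain ⟨-, hAK', -, -, -⟩ := h.containment hK hL hLK.symm hsub
  obtain ⟨a, haA⟩ := h.hAne
  exact absurd (Finset.mem_inter.mpr ⟨haA, hAK haA⟩) (hAK' ▸ Finset.notMem_empty a)

lemma imgF₁_mem : F₁ \ A ∈ contraction S A := h.img_mem_contraction h.hF₁ h.hAF

end MHyp

end AuxM

section AuxLeaf
set_option linter.unusedSectionVars false

variable {V : Type} [Fintype V] [DecidableEq V]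

open Finset

namespace MHyp

variable {S : Finset (Finset V)} {F₁ A : Finset V} (h : MHyp S F₁ A)

include h

/-- images of leaves that survive contraction are leaves of the contraction -/
lemma leaf_img_leaf {F : Finset V} (hF : IsLeafOf S F) (hFC : F \ A ∈ contraction S A) :
    IsLeafOf (contraction S A) (F \ A) := by
  classical
  set T : Finset (Finset V) := S.filter (fun H => H \ A ∈ contraction S A) with hTdef
  have hTS : T ⊆ S := Finset.filter_subset _ _
  have hFT : F ∈ T := Finset.mem_filter.mpr ⟨hF.1, hFC⟩
  have hFleafT : IsLeafOf T F := good_leaf S.card S le_rfl h.hne h.hac h.hg F hF T hTS hFT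
  obtain ⟨-, hall | ⟨J, hJT, hJF, hJ⟩⟩ := hFleafT
  · refine ⟨hFC, Or.inl ?_⟩
    intro X hX
    obtain ⟨⟨H, hHS, hHX⟩, -⟩ := mem_contraction.mp hX
    have hHT : H ∈ T := Finset.mem_filter.mpr ⟨hHS, hHX ▸ hX⟩
    rw [← hHX, hall H hHT]
  · obtain ⟨hJS, hJC⟩ := Finset.mem_filter.mp hJT
    refine ⟨hFC, Or.inr ⟨J \ A, hJC, ?_, ?_⟩⟩
    · intro hh; exact hJF (h.imgInj J hJS F hF.1 hh)
    · intro X hX hXF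
      obtain ⟨⟨H, hHS, hHX⟩, -⟩ := mem_contraction.mp hX
      have hHT : H ∈ T := Finset.mem_filter.mpr ⟨hHS, hHX ▸ hX⟩
      have hHF : H ≠ F := fun hh => hXF (by rw [← hHX, hh])
      rw [← hHX, sdiff_inter_sdiff', sdiff_inter_sdiff']
      exact Finset.sdiff_subset_sdiff (hJ H hHT hHF) (Finset.Subset.refl A)

/-- a facet whose image is strictly inside the image of a leaf has a leaf image -/
lemma dropper_leaf {Kf M : Finset V} (hK : Kf ∈ S) (hMS : M ∈ S) (hM : IsLeafOf S M)
    (hKM : Kf \ A ⊂ M \ A) : IsLeafOf (contraction S A) (Kf \ A) := by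
  classical
  have hKMne : Kf ≠ M := fun hh => hKM.ne (hh ▸ rfl)
  obtain ⟨hAK, hAM, hMF₁, hKF₁int, hKF₁⟩ := h.containment hMS hK hKMne.symm hKM.subset
  have hKC : Kf \ A ∈ contraction S A := h.img_mem_contraction hK hAK
  set T₀ : Finset (Finset V) := S.filter (fun H => H \ A ∈ contraction S A ∧ H ≠ Kf) with hT₀
  have hT₀S : T₀ ⊆ S := Finset.filter_subset _ _
  have hT₀ne : T₀.Nonempty := ⟨F₁, Finset.mem_filter.mpr ⟨h.hF₁, h.imgF₁_mem, fun hh => hKF₁ hh.symm⟩⟩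
  have hchain : ∀ x ∈ T₀, ∀ y ∈ T₀, M ∩ x ⊆ M ∩ y ∨ M ∩ y ⊆ M ∩ x :=
    fun x hx y hy => leaf_inter_chain h.hne h.hac h.hg hM (hT₀S hx) (hT₀S hy)
  obtain ⟨H₀, hH₀T, hH₀max⟩ := exists_chain_max (fun H => M ∩ H) T₀ hT₀ne hchain
  obtain ⟨hH₀S, hH₀C, hH₀K⟩ := Finset.mem_filter.mp hH₀T
  refine ⟨hKC, Or.inr ⟨H₀ \ A, hH₀C, fun hh => hH₀K (h.imgInj H₀ hH₀S Kf hK hh), ?_⟩⟩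
  intro X hX hXK
  obtain ⟨⟨H, hHS, hHX⟩, -⟩ := mem_contraction.mp hX
  have hHK : H ≠ Kf := fun hh => hXK (by rw [← hHX, hh])
  have hHT : H ∈ T₀ := Finset.mem_filter.mpr ⟨hHS, hHX ▸ hX, hHK⟩
  rw [← hHX]
  intro v hv
  obtain ⟨hv1, hv2⟩ := Finset.mem_inter.mp hv
  have hvM : v ∈ M := (Finset.mem_sdiff.mp (hKM.subset hv1)).1
  have hvMH : v ∈ M ∩ H := Finset.mem_inter.mpr ⟨hvM, (Finset.mem_sdiff.mp hv2).1⟩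
  have hvH₀ : v ∈ H₀ := (Finset.mem_inter.mp (hH₀max H hHT hvMH)).2
  exact Finset.mem_inter.mpr ⟨hv1, Finset.mem_sdiff.mpr ⟨hvH₀, (Finset.mem_sdiff.mp hv1).2⟩⟩

/-- if the image of a non-leaf is a leaf of the contraction, it is strictly inside
the image of some leaf -/
lemma leaf_up {G : Finset V} (hGS : G ∈ S) (hGn : ¬ IsLeafOf S G)
    (hGC : G \ A ∈ contraction S A) (hGleaf : IsLeafOf (contraction S A) (G \ A)) :
    ∃ M ∈ S, IsLeafOf S M ∧ G \ A ⊂ M \ A := by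
  by_contra hdrop
  push_neg at hdrop
  obtain ⟨Fs, Gs, hunion, hdisj, hcover, hleaves, hFdisj, hrec⟩ := h.hg.exists_decomp
  have hGGs : G ∈ Gs := by
    have := hGS; rw [hunion] at this
    rcases Finset.mem_union.mp this with hh | hh
    · exact absurd ((hleaves G).mpr hh) hGn
    · exact hh
  obtain ⟨-, hall | ⟨XJ, hXJC, hXJne, hdom⟩⟩ := hGleaf
  · have heq := hall (F₁ \ A) h.imgF₁_mem
    have : F₁ = G := h.imgInj F₁ h.hF₁ G hGS heq
    exact hGn (this ▸ h.leafF₁)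
  · obtain ⟨⟨J, hJS, hJX⟩, -⟩ := mem_contraction.mp hXJC
    have hJG : J ≠ G := fun hh => hXJne (by rw [← hJX, hh])
    have hsub : G \ A ⊆ J \ A := by
      intro v hv
      obtain ⟨hvG, hvA⟩ := Finset.mem_sdiff.mp hv
      obtain ⟨L, hLFs, hvL⟩ := hcover G hGGs v hvG
      have hLS : L ∈ S := hunion ▸ Finset.mem_union_left _ hLFs
      have hLleaf : IsLeafOf S L := (hleaves L).mpr hLFs
      by_cases hLC : L \ A ∈ contraction S A
      · have hLG : L ≠ G := fun hh => hGn (hh ▸ hLleaf)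
        have hXL : L \ A ≠ G \ A := fun hh => hLG (h.imgInj L hLS G hGS hh)
        have hd := hdom (L \ A) hLC hXL
          (Finset.mem_inter.mpr ⟨hv, Finset.mem_sdiff.mpr ⟨hvL, hvA⟩⟩)
        rw [hJX]
        exact (Finset.mem_inter.mp hd).2
      · have hex : ∃ K ∈ S, K \ A ⊆ L \ A ∧ K \ A ≠ L \ A := by
          rw [mem_contraction] at hLC
          push_neg at hLC
          exact hLC ⟨L, hLS, rfl⟩
        obtain ⟨K, hKS, hKL, hKLne⟩ := hex
        have hKLne' : K ≠ L := fun hh => hKLne (hh ▸ rfl)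
        by_cases hKG : K = G
        · subst hKG
          exact absurd (Finset.ssubset_iff_subset_ne.mpr ⟨hKL, hKLne⟩) (hdrop L hLS hLleaf)
        · rcases leaf_inter_chain h.hne h.hac h.hg hLleaf hGS hKS with hc | hc
          · have hvK : v ∈ K := (Finset.mem_inter.mp (hc (Finset.mem_inter.mpr ⟨hvL, hvG⟩))).2
            obtain ⟨hAK, -, -, -, -⟩ := h.containment hLS hKS (fun hh => hKLne' hh.symm) hKL
            have hKC : K \ A ∈ contraction S A := h.img_mem_contraction hKS hAK
            have hXK : K \ A ≠ G \ A := fun hh => hKG (h.imgInj K hKS G hGS hh)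
            have hd := hdom (K \ A) hKC hXK
              (Finset.mem_inter.mpr ⟨hv, Finset.mem_sdiff.mpr ⟨hvK, hvA⟩⟩)
            rw [hJX]
            exact (Finset.mem_inter.mp hd).2
          · exfalso
            have hKsubG : K \ A ⊆ G \ A := by
              intro w hw
              obtain ⟨hwK, hwA⟩ := Finset.mem_sdiff.mp hw
              have hwL : w ∈ L := (Finset.mem_sdiff.mp (hKL hw)).1
              have hwG : w ∈ G :=
                (Finset.mem_inter.mp (hc (Finset.mem_inter.mpr ⟨hwL, hwK⟩))).2
              exact Finset.mem_sdiff.mpr ⟨hwG, hwA⟩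
            obtain ⟨-, hmin⟩ := mem_contraction.mp hGC
            exact hKG (h.imgInj K hKS G hGS (hmin K hKS hKsubG))
    obtain ⟨-, hminJ⟩ := mem_contraction.mp hXJC
    have heq : G \ A = XJ := hminJ G hGS (hJX ▸ hsub)
    exact hJG (h.imgInj J hJS G hGS (by rw [hJX, ← heq]))

end MHyp

end AuxLeaf

section AuxDisj
set_option linter.unusedSectionVars false

variable {V : Type} [Fintype V] [DecidableEq V]

open Finset

namespace MHyp

variable {S : Finset (Finset V)} {F₁ A : Finset V} (h : MHyp S F₁ A)

include h

lemma leavesS_disj {P M : Finset V} (hP : IsLeafOf S P) (hM : IsLeafOf S M) (hne' : P ≠ M) :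
    P ∩ M = ∅ := by
  obtain ⟨Fs, Gs, hunion, hdisj, hcover, hleaves, hFdisj, hrec⟩ := h.hg.exists_decomp
  exact hFdisj P ((hleaves P).mp hP) M ((hleaves M).mp hM) hne'

lemma disj_leaf_dropper {P Q M : Finset V} (hPS : P ∈ S) (hP : IsLeafOf S P)
    (hPC : P \ A ∈ contraction S A) (hQS : Q ∈ S) (hMS : M ∈ S) (hM : IsLeafOf S M)
    (hQM : Q \ A ⊂ M \ A) : (P \ A) ∩ (Q \ A) = ∅ := by
  have hQMne : Q ≠ M := fun hh => hQM.ne (hh ▸ rfl)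
  obtain ⟨hAQ, hAM, hMF₁, hQF₁, -⟩ := h.containment hMS hQS hQMne.symm hQM.subset
  by_cases hPF₁ : P = F₁
  · subst hPF₁
    rw [sdiff_inter_sdiff', Finset.inter_comm, hQF₁, Finset.sdiff_self]
  · apply Finset.eq_empty_of_forall_notMem
    intro u hu
    obtain ⟨hu1, hu2⟩ := Finset.mem_inter.mp hu
    have huP : u ∈ P := (Finset.mem_sdiff.mp hu1).1
    have huM : u ∈ M := (Finset.mem_sdiff.mp (hQM.subset hu2)).1
    by_cases hPM : P = M
    · subst hPM
      obtain ⟨-, hmin⟩ := mem_contraction.mp hPC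
      exact hQM.ne (hmin Q hQS hQM.subset)
    · have := h.leavesS_disj hP hM hPM
      exact absurd (this ▸ Finset.mem_inter.mpr ⟨huP, huM⟩) (Finset.notMem_empty u)

/-- leaves of the contraction are pairwise disjoint -/
lemma contraction_leaves_disjoint {X Y : Finset V}
    (hX : IsLeafOf (contraction S A) X) (hY : IsLeafOf (contraction S A) Y) (hne' : X ≠ Y) :
    X ∩ Y = ∅ := by
  obtain ⟨⟨P, hPS, hPX⟩, -⟩ := mem_contraction.mp hX.1
  obtain ⟨⟨Q, hQS, hQY⟩, -⟩ := mem_contraction.mp hY.1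
  subst hPX; subst hQY
  by_cases hPleaf : IsLeafOf S P <;> by_cases hQleaf : IsLeafOf S Q
  · have hPQ : P ≠ Q := fun hh => hne' (hh ▸ rfl)
    rw [sdiff_inter_sdiff', h.leavesS_disj hPleaf hQleaf hPQ, Finset.empty_sdiff]
  · obtain ⟨M, hMS, hMleaf, hQM⟩ := h.leaf_up hQS hQleaf hY.1 hY
    exact h.disj_leaf_dropper hPS hPleaf hX.1 hQS hMS hMleaf hQM
  · obtain ⟨M, hMS, hMleaf, hPM⟩ := h.leaf_up hPS hPleaf hX.1 hX
    rw [Finset.inter_comm]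
    exact h.disj_leaf_dropper hQS hQleaf hY.1 hPS hMS hMleaf hPM
  · obtain ⟨M, hMS, hMleaf, hPM⟩ := h.leaf_up hPS hPleaf hX.1 hX
    obtain ⟨M', hMS', hMleaf', hQM⟩ := h.leaf_up hQS hQleaf hY.1 hY
    apply Finset.eq_empty_of_forall_notMem
    intro u hu
    obtain ⟨hu1, hu2⟩ := Finset.mem_inter.mp hu
    have huM : u ∈ M := (Finset.mem_sdiff.mp (hPM.subset hu1)).1
    have huM' : u ∈ M' := (Finset.mem_sdiff.mp (hQM.subset hu2)).1
    have hMM : M = M' := by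
      by_contra hMM
      have := h.leavesS_disj hMleaf hMleaf' hMM
      exact absurd (this ▸ Finset.mem_inter.mpr ⟨huM, huM'⟩) (Finset.notMem_empty u)
    subst hMM
    have hPMne : P ≠ M := fun hh => hPM.ne (hh ▸ rfl)
    have hQMne : Q ≠ M := fun hh => hQM.ne (hh ▸ rfl)
    obtain ⟨-, hAM, -, -, -⟩ := h.containment hMS hPS hPMne.symm hPM.subset
    have hMP : M ∩ P = P \ A := by
      apply Finset.Subset.antisymm
      · intro w hw
        obtain ⟨hwM, hwP⟩ := Finset.mem_inter.mp hw
        refine Finset.mem_sdiff.mpr ⟨hwP, fun hwA => ?_⟩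
        exact absurd (Finset.mem_inter.mpr ⟨hwA, hwM⟩) (hAM ▸ Finset.notMem_empty w)
      · intro w hw
        exact Finset.mem_inter.mpr ⟨(Finset.mem_sdiff.mp (hPM.subset hw)).1,
          (Finset.mem_sdiff.mp hw).1⟩
    have hMQ : M ∩ Q = Q \ A := by
      obtain ⟨-, hAM', -, -, -⟩ := h.containment hMS hQS hQMne.symm hQM.subset
      apply Finset.Subset.antisymm
      · intro w hw
        obtain ⟨hwM, hwQ⟩ := Finset.mem_inter.mp hw
        refine Finset.mem_sdiff.mpr ⟨hwQ, fun hwA => ?_⟩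
        exact absurd (Finset.mem_inter.mpr ⟨hwA, hwM⟩) (hAM' ▸ Finset.notMem_empty w)
      · intro w hw
        exact Finset.mem_inter.mpr ⟨(Finset.mem_sdiff.mp (hQM.subset hw)).1,
          (Finset.mem_sdiff.mp hw).1⟩
    rcases leaf_inter_chain h.hne h.hac h.hg hMleaf hPS hQS with hc | hc
    · rw [hMP, hMQ] at hc
      obtain ⟨-, hmin⟩ := mem_contraction.mp hY.1
      exact hne' (hmin P hPS hc)
    · rw [hMP, hMQ] at hc
      obtain ⟨-, hmin⟩ := mem_contraction.mp hX.1
      exact hne'.symm (hmin Q hQS hc)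

/-- vertices of non-leaves of the contraction are covered by leaves -/
lemma contraction_cover {X : Finset V} (hX : X ∈ contraction S A)
    (hXnl : ¬ IsLeafOf (contraction S A) X) {v : V} (hv : v ∈ X) :
    ∃ Y, IsLeafOf (contraction S A) Y ∧ v ∈ Y := by
  obtain ⟨⟨G, hGS, hGX⟩, -⟩ := mem_contraction.mp hX
  subst hGX
  have hGn : ¬ IsLeafOf S G := fun hh => hXnl (h.leaf_img_leaf hh hX)
  obtain ⟨Fs, Gs, hunion, hdisj, hcover, hleaves, hFdisj, hrec⟩ := h.hg.exists_decomp
  have hGGs : G ∈ Gs := by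
    have := hGS; rw [hunion] at this
    rcases Finset.mem_union.mp this with hh | hh
    · exact absurd ((hleaves G).mpr hh) hGn
    · exact hh
  obtain ⟨hvG, hvA⟩ := Finset.mem_sdiff.mp hv
  obtain ⟨L, hLFs, hvL⟩ := hcover G hGGs v hvG
  have hLS : L ∈ S := hunion ▸ Finset.mem_union_left _ hLFs
  have hLleaf : IsLeafOf S L := (hleaves L).mpr hLFs
  by_cases hLC : L \ A ∈ contraction S A
  · exact ⟨L \ A, h.leaf_img_leaf hLleaf hLC, Finset.mem_sdiff.mpr ⟨hvL, hvA⟩⟩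
  · have hex : ∃ K ∈ S, K \ A ⊆ L \ A ∧ K \ A ≠ L \ A := by
      rw [mem_contraction] at hLC
      push_neg at hLC
      exact hLC ⟨L, hLS, rfl⟩
    obtain ⟨K, hKS, hKL, hKLne⟩ := hex
    by_cases hKG : K = G
    · subst hKG
      exact absurd (h.dropper_leaf hKS hLS hLleaf (Finset.ssubset_iff_subset_ne.mpr ⟨hKL, hKLne⟩))
        hXnl
    · rcases leaf_inter_chain h.hne h.hac h.hg hLleaf hGS hKS with hc | hc
      · have hvK : v ∈ K := (Finset.mem_inter.mp (hc (Finset.mem_inter.mpr ⟨hvL, hvG⟩))).2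
        exact ⟨K \ A,
          h.dropper_leaf hKS hLS hLleaf (Finset.ssubset_iff_subset_ne.mpr ⟨hKL, hKLne⟩),
          Finset.mem_sdiff.mpr ⟨hvK, hvA⟩⟩
      · exfalso
        have hKsubG : K \ A ⊆ G \ A := by
          intro w hw
          obtain ⟨hwK, hwA⟩ := Finset.mem_sdiff.mp hw
          have hwL : w ∈ L := (Finset.mem_sdiff.mp (hKL hw)).1
          have hwG : w ∈ G := (Finset.mem_inter.mp (hc (Finset.mem_inter.mpr ⟨hwL, hwK⟩))).2
          exact Finset.mem_sdiff.mpr ⟨hwG, hwA⟩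
        obtain ⟨-, hmin⟩ := mem_contraction.mp hX
        exact hKG (h.imgInj K hKS G hGS (hmin K hKS hKsubG))

end MHyp

end AuxDisj

section AuxMain
set_option linter.unusedSectionVars false

variable {V : Type} [Fintype V] [DecidableEq V]

open Finset

lemma contraction_isGrafted : ∀ (n : ℕ) (S : Finset (Finset V)) (F₁ A : Finset V),
    S.card ≤ n →
    (∀ F ∈ S, F.Nonempty) → (∀ F ∈ S, ∀ G ∈ S, F ⊆ G → F = G) → IsGrafted S →
    F₁ ∈ S → A ⊆ F₁ → (F₁ \ A).Nonempty →
    (∀ H ∈ S, H ≠ F₁ → (H ∩ F₁).Nonempty → A ⊆ H) →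
    IsGrafted (contraction S A) := by
  intro n
  induction n with
  | zero =>
    intro S F₁ A hcard _ _ _ hF₁ _ _ _
    rw [Nat.le_zero, Finset.card_eq_zero] at hcard
    exact absurd hF₁ (by simp [hcard])
  | succ n ih =>
    intro S F₁ A hcard hne hac hg hF₁ hAF hF₁A h2
    rcases A.eq_empty_or_nonempty with rfl | hAne
    · rwa [contraction_empty hac]
    classical
    have h : MHyp S F₁ A := ⟨hne, hac, hg, hF₁, hAF, hAne, hF₁A, h2⟩
    refine IsGrafted.intro (contraction S A)
      ((contraction S A).filter (fun X => IsLeafOf (contraction S A) X))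
      ((contraction S A).filter (fun X => ¬ IsLeafOf (contraction S A) X))
      ?_ ?_ ?_ ?_ ?_ ?_
    · exact (Finset.filter_union_filter_not_eq _ (contraction S A)).symm
    · exact Finset.disjoint_filter_filter_not (contraction S A) (contraction S A) _
    · intro X hX v hv
      obtain ⟨hXC, hXnl⟩ := Finset.mem_filter.mp hX
      obtain ⟨Y, hY, hvY⟩ := h.contraction_cover hXC hXnl hv
      exact ⟨Y, Finset.mem_filter.mpr ⟨hY.1, hY⟩, hvY⟩
    · intro X
      constructor
      · intro hX; exact Finset.mem_filter.mpr ⟨hX.1, hX⟩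
      · intro hX; exact (Finset.mem_filter.mp hX).2
    · intro X hX Y hY hne'
      exact h.contraction_leaves_disjoint (Finset.mem_filter.mp hX).2
        (Finset.mem_filter.mp hY).2 hne'
    · intro X hX
      obtain ⟨hXC, hXnl⟩ := Finset.mem_filter.mp hX
      obtain ⟨⟨G, hGS, hGX⟩, -⟩ := mem_contraction.mp hXC
      subst hGX
      have hGn : ¬ IsLeafOf S G := fun hh => hXnl (h.leaf_img_leaf hh hXC)
      set E : Finset (Finset V) := insert G (S.filter (fun H => G \ A ⊂ H \ A)) with hE
      have hES : E ⊆ S := by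
        intro e he
        rcases Finset.mem_insert.mp he with rfl | he
        · exact hGS
        · exact (Finset.mem_filter.mp he).1
      have hEn : ∀ e ∈ E, ¬ IsLeafOf S e := by
        intro e he
        rcases Finset.mem_insert.mp he with rfl | he
        · exact hGn
        · obtain ⟨heS, hGe⟩ := Finset.mem_filter.mp he
          intro heleaf
          exact hXnl (h.dropper_leaf hGS heS heleaf hGe)
      have hgE : IsGrafted (S \ E) := isGrafted_sdiff E hg hne hES hEn
      have hkey : (contraction S A).erase (G \ A) = contraction (S \ E) A := by
        ext Y
        constructor
        · intro hY
          obtain ⟨hYne, hYC⟩ := Finset.mem_erase.mp hY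
          obtain ⟨⟨H, hHS, hHY⟩, hmin⟩ := mem_contraction.mp hYC
          have hHG : H ≠ G := fun hh => hYne (by rw [← hHY, hh])
          have hHE : H ∉ E := by
            intro hh
            rcases Finset.mem_insert.mp hh with hh | hh
            · exact hHG hh
            · obtain ⟨-, hGH⟩ := Finset.mem_filter.mp hh
              have := hmin G hGS (hHY ▸ hGH.subset)
              exact hYne this.symm
          rw [mem_contraction]
          refine ⟨⟨H, Finset.mem_sdiff.mpr ⟨hHS, hHE⟩, hHY⟩, ?_⟩
          intro L hL hsub
          exact hmin L (Finset.mem_sdiff.mp hL).1 hsub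
        · intro hY
          obtain ⟨⟨H, hHSE, hHY⟩, hmin⟩ := mem_contraction.mp hY
          obtain ⟨hHS, hHE⟩ := Finset.mem_sdiff.mp hHSE
          have hYC : Y ∈ contraction S A := by
            rw [mem_contraction]
            refine ⟨⟨H, hHS, hHY⟩, ?_⟩
            intro L hLS hsub
            by_cases hLE : L ∈ E
            · rcases Finset.mem_insert.mp hLE with rfl | hLE
              · by_contra hne''
                have hss : L \ A ⊂ H \ A :=
                  hHY ▸ Finset.ssubset_iff_subset_ne.mpr ⟨hsub, hne''⟩
                exact hHE (Finset.mem_insert_of_mem (Finset.mem_filter.mpr ⟨hHS, hss⟩))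
              · obtain ⟨hLS', hGL⟩ := Finset.mem_filter.mp hLE
                exfalso
                have hss : G \ A ⊂ H \ A := hHY ▸ (lt_of_lt_of_le hGL hsub)
                exact hHE (Finset.mem_insert_of_mem (Finset.mem_filter.mpr ⟨hHS, hss⟩))
            · exact hmin L (Finset.mem_sdiff.mpr ⟨hLS, hLE⟩) hsub
          refine Finset.mem_erase.mpr ⟨?_, hYC⟩
          intro hh
          have : H = G := h.imgInj H hHS G hGS (by rw [hHY, hh])
          exact hHE (this ▸ Finset.mem_insert_self G _)
      rw [hkey]
      have hGnotin : G ∉ S \ E := fun hh =>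
        (Finset.mem_sdiff.mp hh).2 (Finset.mem_insert_self G _)
      have hss : S \ E ⊂ S := by
        rw [Finset.ssubset_iff_of_subset Finset.sdiff_subset]
        exact ⟨G, hGS, hGnotin⟩
      have hcard' : (S \ E).card ≤ n := by
        have := Finset.card_lt_card hss
        omega
      have hF₁E : F₁ ∉ E := by
        intro hh
        rcases Finset.mem_insert.mp hh with hh | hh
        · exact hGn (hh ▸ h.leafF₁)
        · obtain ⟨-, hGF₁⟩ := Finset.mem_filter.mp hh
          obtain ⟨-, hmin⟩ := mem_contraction.mp h.imgF₁_mem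
          exact hGF₁.ne (hmin G hGS hGF₁.subset)
      exact ih (S \ E) F₁ A hcard'
        (fun F hF => hne F (Finset.mem_sdiff.mp hF).1)
        (fun F hF G' hG' => hac F (Finset.mem_sdiff.mp hF).1 G' (Finset.mem_sdiff.mp hG').1)
        hgE (Finset.mem_sdiff.mpr ⟨hF₁, hF₁E⟩) hAF hF₁A
        (fun H hH => h2 H (Finset.mem_sdiff.mp hH).1)

lemma contraction_hasLeafProp {S : Finset (Finset V)} {F₁ A : Finset V} (h : MHyp S F₁ A)
    (hforest : HasLeafProp S) : HasLeafProp (contraction S A) := by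
  classical
  intro T hT hTne
  set T' : Finset (Finset V) := S.filter (fun H => H \ A ∈ T) with hT'
  have hT'S : T' ⊆ S := Finset.filter_subset _ _
  have hT'ne : T'.Nonempty := by
    obtain ⟨X, hXT⟩ := hTne
    obtain ⟨⟨H, hHS, hHX⟩, -⟩ := mem_contraction.mp (hT hXT)
    exact ⟨H, Finset.mem_filter.mpr ⟨hHS, hHX ▸ hXT⟩⟩
  obtain ⟨F₀, hF₀⟩ := hforest T' hT'S hT'ne
  obtain ⟨hF₀T', hall | ⟨G₀, hG₀T', hG₀F₀, hdom⟩⟩ := hF₀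
  · refine ⟨F₀ \ A, (Finset.mem_filter.mp hF₀T').2, Or.inl ?_⟩
    intro Y hY
    obtain ⟨⟨H, hHS, hHY⟩, -⟩ := mem_contraction.mp (hT hY)
    rw [← hHY, hall H (Finset.mem_filter.mpr ⟨hHS, hHY ▸ hY⟩)]
  · obtain ⟨hF₀S, hF₀T⟩ := Finset.mem_filter.mp hF₀T'
    obtain ⟨hG₀S, hG₀T⟩ := Finset.mem_filter.mp hG₀T'
    refine ⟨F₀ \ A, hF₀T, Or.inr ⟨G₀ \ A, hG₀T, ?_, ?_⟩⟩
    · intro hh; exact hG₀F₀ (h.imgInj G₀ hG₀S F₀ hF₀S hh)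
    · intro Y hY hYne
      obtain ⟨⟨H, hHS, hHY⟩, -⟩ := mem_contraction.mp (hT hY)
      have hHT' : H ∈ T' := Finset.mem_filter.mpr ⟨hHS, hHY ▸ hY⟩
      have hHF₀ : H ≠ F₀ := fun hh => hYne (by rw [← hHY, hh])
      rw [← hHY, sdiff_inter_sdiff', sdiff_inter_sdiff']
      exact Finset.sdiff_subset_sdiff (hdom H hHT' hHF₀) (Finset.Subset.refl A)

end AuxMain

section Statements

variable {V : Type} [Fintype V] [DecidableEq V] (K : Type) [Field K]

theorem stmt15 (Δ : SimplicialComplexOn V)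
    (Fs Gs : Finset (Finset V))
    (hforest : HasLeafProp Δ.facets)
    (hdecomp : IsGraftingDecomp Δ.facets Fs Gs)
    (F₁ : Finset V) (hF₁ : F₁ ∈ Fs) (hspec : IsSpecialLeafOf Δ.facets F₁)
    (hmeet : ∃ G ∈ Gs, (F₁ ∩ G).Nonempty)
    (A : Finset V)
    (hAdef : A = F₁.filter fun v => ∀ G ∈ Gs, (F₁ ∩ G).Nonempty → v ∈ G) :
    IsCMForestFacets (contraction Δ.facets A) ∧
      IsSpecialLeafOf (contraction Δ.facets A) (F₁ \ A) := by
  classical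
  obtain ⟨hunion, hdisjFG, hcover, hleaves, hFdisj, hrec⟩ := hdecomp
  have hg : IsGrafted Δ.facets :=
    IsGrafted.intro _ Fs Gs hunion hdisjFG hcover hleaves hFdisj hrec
  have hF₁S : F₁ ∈ Δ.facets := hunion ▸ Finset.mem_union_left _ hF₁
  have hF₁leaf : IsLeafOf Δ.facets F₁ := (hleaves F₁).mpr hF₁
  have hAF : A ⊆ F₁ := by rw [hAdef]; exact Finset.filter_subset _ _
  have h2 : ∀ H ∈ Δ.facets, H ≠ F₁ → (H ∩ F₁).Nonempty → A ⊆ H := by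
    intro H hHS hHF₁ hHint
    have hHGs : H ∈ Gs := by
      rw [hunion] at hHS
      rcases Finset.mem_union.mp hHS with hh | hh
      · exfalso
        have hd := hFdisj F₁ hF₁ H hh (fun x => hHF₁ x.symm)
        obtain ⟨v, hv⟩ := hHint
        obtain ⟨hv1, hv2⟩ := Finset.mem_inter.mp hv
        exact absurd (hd ▸ Finset.mem_inter.mpr ⟨hv2, hv1⟩) (Finset.notMem_empty v)
      · exact hh
    intro v hv
    rw [hAdef] at hv
    obtain ⟨hvF₁, hv2⟩ := Finset.mem_filter.mp hv
    obtain ⟨w, hw⟩ := hHint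
    exact hv2 H hHGs ⟨w, Finset.mem_inter.mpr
      ⟨(Finset.mem_inter.mp hw).2, (Finset.mem_inter.mp hw).1⟩⟩
  have hF₁A : (F₁ \ A).Nonempty := by
    obtain ⟨G₀, hG₀Gs, hG₀meet⟩ := hmeet
    have hG₀S : G₀ ∈ Δ.facets := hunion ▸ Finset.mem_union_right _ hG₀Gs
    have hF₁G₀ : F₁ ≠ G₀ := by
      intro hh
      exact Finset.disjoint_left.mp hdisjFG hF₁ (hh ▸ hG₀Gs)
    have hnsub : ¬ F₁ ⊆ G₀ := fun hsub => hF₁G₀ (Δ.antichain F₁ hF₁S G₀ hG₀S hsub)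
    obtain ⟨v, hvF₁, hvG₀⟩ := Finset.not_subset.mp hnsub
    refine ⟨v, Finset.mem_sdiff.mpr ⟨hvF₁, fun hvA => ?_⟩⟩
    rw [hAdef] at hvA
    exact hvG₀ ((Finset.mem_filter.mp hvA).2 G₀ hG₀Gs hG₀meet)
  rcases A.eq_empty_or_nonempty with hAe | hAne
  · rw [hAe, contraction_empty Δ.antichain, Finset.sdiff_empty]
    exact ⟨⟨hforest, hg⟩, hspec⟩
  · have h : MHyp Δ.facets F₁ A :=
      ⟨Δ.nonempty_facet, Δ.antichain, hg, hF₁S, hAF, hAne, hF₁A, h2⟩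
    have hCg : IsGrafted (contraction Δ.facets A) :=
      contraction_isGrafted Δ.facets.card Δ.facets F₁ A le_rfl Δ.nonempty_facet
        Δ.antichain hg hF₁S hAF hF₁A h2
    have hCforest : HasLeafProp (contraction Δ.facets A) :=
      contraction_hasLeafProp h hforest
    have hF₁Aleaf : IsLeafOf (contraction Δ.facets A) (F₁ \ A) :=
      h.leaf_img_leaf hF₁leaf h.imgF₁_mem
    refine ⟨⟨hCforest, hCg⟩, hF₁Aleaf, ?_⟩
    intro X hX Y hY hXne hYne
    obtain ⟨⟨P, hPS, hPX⟩, -⟩ := mem_contraction.mp hX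
    obtain ⟨⟨Q, hQS, hQY⟩, -⟩ := mem_contraction.mp hY
    have hPF₁ : P ≠ F₁ := fun hh => hXne (by rw [← hPX, hh])
    have hQF₁ : Q ≠ F₁ := fun hh => hYne (by rw [← hQY, hh])
    subst hPX; subst hQY
    rw [sdiff_inter_sdiff']
    constructor
    · intro hne'
      have hPQ : (P ∩ Q).Nonempty := by
        obtain ⟨w, hw⟩ := hne'
        exact ⟨w, (Finset.mem_sdiff.mp hw).1⟩
      obtain ⟨w, hw⟩ := (hspec.2 P hPS Q hQS hPF₁ hQF₁).mp hPQ
      obtain ⟨hwPQ, hwF₁⟩ := Finset.mem_sdiff.mp hw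
      refine ⟨w, Finset.mem_sdiff.mpr
        ⟨Finset.mem_sdiff.mpr ⟨hwPQ, fun hwA => hwF₁ (hAF hwA)⟩, ?_⟩⟩
      intro hh
      exact hwF₁ (Finset.mem_sdiff.mp hh).1
    · intro hne'
      obtain ⟨w, hw⟩ := hne'
      exact ⟨w, (Finset.mem_sdiff.mp hw).1⟩

end Statements
end
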